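/- arXiv:2202.13573 — 6 statements merged into one kernel-verified Lean document; each statement's English description precedes it below -/
import Mathlib

section
/- If n is a positive integer with n ≡ 4 (mod 8) or n ≡ 6 (mod 8), then there exist integers a₁, a₂, a₃ with a₁² + 2a₂² + 3a₃² = n and both a₁ and a₃ odd. -/
open ZMod

lemma round_step (x t : ℤ) (ht : 0 < t) : ∃ ξ : ℤ, 4 * (x - t * ξ) ^ 2 ≤ t ^ 2 := by
  refine ⟨(2 * x + t) / (2 * t), ?_⟩
  have h2t : (0:ℤ) < 2 * t := by linarith
  have hdm := Int.mul_ediv_add_emod (2 * x + t) (2 * t)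
  have hr0 : 0 ≤ (2 * x + t) % (2 * t) := Int.emod_nonneg _ (by positivity)
  have hrlt : (2 * x + t) % (2 * t) < 2 * t := Int.emod_lt_of_pos _ h2t
  set r := (2 * x + t) % (2 * t) with hrdef
  set ξ := (2 * x + t) / (2 * t) with hxi
  have key : 2 * (x - t * ξ) = r - t := by linarith [hdm]
  nlinarith [sq_nonneg (r - t), hr0, hrlt]

/-- Aubry / Davenport–Cassels descent for sums of three squares. -/
lemma aubry_descent (m : ℤ) :
    ∀ k : ℕ, ∀ t : ℤ, t.natAbs = k → t ≠ 0 →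
      ∀ x y z : ℤ, x ^ 2 + y ^ 2 + z ^ 2 = m * t ^ 2 →
      ∃ a b c : ℤ, a ^ 2 + b ^ 2 + c ^ 2 = m := by
  intro k
  induction k using Nat.strong_induction_on with
  | _ k IH =>
    intro t htk ht x y z h
    -- replace t by |t|
    have habs : |t| > 0 := abs_pos.mpr ht
    have hsq : t ^ 2 = |t| ^ 2 := (sq_abs t).symm
    rw [hsq] at h
    set s := |t| with hs
    have hsk : s.natAbs = k := by rw [hs, Int.natAbs_abs]; exact htk
    clear hsq hs htk ht
    -- now s > 0 and x²+y²+z² = m s²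
    by_cases hs1 : s = 1
    · exact ⟨x, y, z, by rw [hs1] at h; linarith [h]⟩
    · have hs2 : 2 ≤ s := by omega
      obtain ⟨ξ₁, hξ₁⟩ := round_step x s habs
      obtain ⟨ξ₂, hξ₂⟩ := round_step y s habs
      obtain ⟨ξ₃, hξ₃⟩ := round_step z s habs
      set q := ξ₁ ^ 2 + ξ₂ ^ 2 + ξ₃ ^ 2 with hq
      set B := x * ξ₁ + y * ξ₂ + z * ξ₃ with hB
      set t' := m * s - 2 * B + s * q with ht'
      have key : s * t' = (x - s * ξ₁) ^ 2 + (y - s * ξ₂) ^ 2 + (z - s * ξ₃) ^ 2 := by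
        rw [ht', hq, hB]; linear_combination -h
      have ht'0 : 0 ≤ t' := by
        by_contra hneg
        push_neg at hneg
        nlinarith [sq_nonneg (x - s * ξ₁), sq_nonneg (y - s * ξ₂), sq_nonneg (z - s * ξ₃)]
      have ht's : t' < s := by
        nlinarith [key, hξ₁, hξ₂, hξ₃]
      rcases eq_or_lt_of_le ht'0 with ht'z | ht'p
      · -- t' = 0 : x = sξ₁ etc, m = q
        have hw : (x - s * ξ₁) ^ 2 + (y - s * ξ₂) ^ 2 + (z - s * ξ₃) ^ 2 = 0 := by
          rw [← key, ← ht'z]; ring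
        have q1 := sq_nonneg (x - s * ξ₁)
        have q2 := sq_nonneg (y - s * ξ₂)
        have q3 := sq_nonneg (z - s * ξ₃)
        have e1 : (x - s * ξ₁) ^ 2 = 0 := by linarith
        have e2 : (y - s * ξ₂) ^ 2 = 0 := by linarith
        have e3 : (z - s * ξ₃) ^ 2 = 0 := by linarith
        have h1 : x - s * ξ₁ = 0 := by exact pow_eq_zero_iff (two_ne_zero) |>.mp e1
        have h2 : y - s * ξ₂ = 0 := by exact pow_eq_zero_iff (two_ne_zero) |>.mp e2
        have h3 : z - s * ξ₃ = 0 := by exact pow_eq_zero_iff (two_ne_zero) |>.mp e3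
        refine ⟨ξ₁, ξ₂, ξ₃, ?_⟩
        have hx : x = s * ξ₁ := by linarith
        have hy : y = s * ξ₂ := by linarith
        have hz : z = s * ξ₃ := by linarith
        have : s ^ 2 * q = m * s ^ 2 := by rw [hq]; subst hx hy hz; linarith [h]
        have hss : s ^ 2 ≠ 0 := by positivity
        have := mul_left_cancel₀ hss (by linarith : s ^ 2 * q = s ^ 2 * m)
        rw [hq] at this; linarith [this]
      · -- descent
        have hlt : t'.natAbs < k := by
          rw [← hsk]
          exact Int.natAbs_lt_natAbs_of_nonneg_of_lt ht'0 ht's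
        exact IH t'.natAbs hlt t' rfl ht'p.ne'
          ((q - m) * x + (2 * m * s - 2 * B) * ξ₁)
          ((q - m) * y + (2 * m * s - 2 * B) * ξ₂)
          ((q - m) * z + (2 * m * s - 2 * B) * ξ₃)
          (by rw [ht', hq, hB]; linear_combination (ξ₁^2+ξ₂^2+ξ₃^2 - m)^2 * h)

lemma key1 (M x y z : ℤ) (h : x ^ 2 + y ^ 2 + z ^ 2 = 3 * M) :
    ∃ s U W : ℤ, M = s ^ 2 + 2 * (U ^ 2 + U * W + W ^ 2) := by
  -- normalize signs so each coordinate is ≡ 0 or 1 mod 3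
  obtain ⟨x', hx'sq, hx'm⟩ : ∃ x' : ℤ, x' ^ 2 = x ^ 2 ∧ (x' % 3 = 0 ∨ x' % 3 = 1) := by
    rcases (by omega : x % 3 = 0 ∨ x % 3 = 1 ∨ x % 3 = 2) with h0 | h1 | h2
    · exact ⟨x, rfl, Or.inl h0⟩
    · exact ⟨x, rfl, Or.inr h1⟩
    · exact ⟨-x, by ring, Or.inr (by omega)⟩
  obtain ⟨y', hy'sq, hy'm⟩ : ∃ y' : ℤ, y' ^ 2 = y ^ 2 ∧ (y' % 3 = 0 ∨ y' % 3 = 1) := by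
    rcases (by omega : y % 3 = 0 ∨ y % 3 = 1 ∨ y % 3 = 2) with h0 | h1 | h2
    · exact ⟨y, rfl, Or.inl h0⟩
    · exact ⟨y, rfl, Or.inr h1⟩
    · exact ⟨-y, by ring, Or.inr (by omega)⟩
  obtain ⟨z', hz'sq, hz'm⟩ : ∃ z' : ℤ, z' ^ 2 = z ^ 2 ∧ (z' % 3 = 0 ∨ z' % 3 = 1) := by
    rcases (by omega : z % 3 = 0 ∨ z % 3 = 1 ∨ z % 3 = 2) with h0 | h1 | h2
    · exact ⟨z, rfl, Or.inl h0⟩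
    · exact ⟨z, rfl, Or.inr h1⟩
    · exact ⟨-z, by ring, Or.inr (by omega)⟩
  rw [← hx'sq, ← hy'sq, ← hz'sq] at h
  clear hx'sq hy'sq hz'sq
  -- mod 3 analysis : all ≡ 0 or all ≡ 1
  have hsq : ∀ w : ℤ, w % 3 = 0 ∨ w % 3 = 1 → w ^ 2 % 3 = w % 3 := by
    intro w hw
    have h9 := Int.emod_emod_of_dvd w (by norm_num : (3:ℤ) ∣ 9)
    rcases hw with h0 | h1
    · obtain ⟨k, hk⟩ := Int.dvd_of_emod_eq_zero h0
      have : w ^ 2 = 3 * (3 * k ^ 2) := by rw [hk]; ring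
      omega
    · obtain ⟨k, hk⟩ : (3:ℤ) ∣ w - 1 := by omega
      have : w = 3 * k + 1 := by linarith
      subst this
      have : (3*k+1)^2 = 3 * (3*k^2 + 2*k) + 1 := by ring
      omega
  have hx2 := hsq x' hx'm
  have hy2 := hsq y' hy'm
  have hz2 := hsq z' hz'm
  have hmod : (x' % 3 + y' % 3 + z' % 3) % 3 = 0 := by
    have : (x' ^ 2 + y' ^ 2 + z' ^ 2) % 3 = 0 := by omega
    omega
  have hall : (x' % 3 = 0 ∧ y' % 3 = 0 ∧ z' % 3 = 0) ∨ (x' % 3 = 1 ∧ y' % 3 = 1 ∧ z' % 3 = 1) := by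
    rcases hx'm with a|a <;> rcases hy'm with b|b <;> rcases hz'm with c|c <;> omega
  rcases hall with ⟨ha, hb, hc⟩ | ⟨ha, hb, hc⟩
  · -- all divisible by 3 : M = 3*(Σ₁), use identity directly
    obtain ⟨x₁, hx₁⟩ := Int.dvd_of_emod_eq_zero ha
    obtain ⟨y₁, hy₁⟩ := Int.dvd_of_emod_eq_zero hb
    obtain ⟨z₁, hz₁⟩ := Int.dvd_of_emod_eq_zero hc
    refine ⟨x₁ + y₁ + z₁, x₁ - y₁, y₁ - z₁, ?_⟩
    have h9 : 9 * (x₁ ^ 2 + y₁ ^ 2 + z₁ ^ 2) = 3 * M := by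
      rw [hx₁, hy₁, hz₁] at h; linarith [h]
    have hM : M = 3 * (x₁ ^ 2 + y₁ ^ 2 + z₁ ^ 2) := by linarith
    rw [hM]; ring
  · -- all ≡ 1 mod 3
    obtain ⟨s, hs⟩ : (3:ℤ) ∣ x' + y' + z' := by omega
    obtain ⟨U, hU⟩ : (3:ℤ) ∣ x' - y' := by omega
    obtain ⟨W, hW⟩ : (3:ℤ) ∣ y' - z' := by omega
    refine ⟨s, U, W, ?_⟩
    have h9 : 9 * M = 9 * (s ^ 2 + 2 * (U ^ 2 + U * W + W ^ 2)) := by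
      have id1 : 3 * (x' ^ 2 + y' ^ 2 + z' ^ 2) =
          (x' + y' + z') ^ 2 + 2 * ((x' - y') ^ 2 + (x' - y') * (y' - z') + (y' - z') ^ 2) := by ring
      rw [hs, hU, hW] at id1
      linarith [id1, h]
    linarith

lemma sq_ne_of_squarefree (n : ℕ) (h : Squarefree n) (h2 : 2 ≤ n) (v : ℤ) :
    v ^ 2 ≠ (n : ℤ) := by
  intro hv
  have hnat : v.natAbs ^ 2 = n := by
    have := congrArg Int.natAbs hv
    simpa [Int.natAbs_pow] using this
  have hdvd : v.natAbs * v.natAbs ∣ n := by rw [← pow_two, hnat]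
  have h1 : v.natAbs = 1 := Nat.isUnit_iff.mp (h _ hdvd)
  rw [h1] at hnat; norm_num at hnat; omega

lemma diff_sq_le (A i j : ℕ) (hi : i < A + 1) (hj : j < A + 1) :
    ((i:ℤ) - j) ^ 2 ≤ (A:ℤ) ^ 2 := by
  have h1 : -(A:ℤ) ≤ (i:ℤ) - j := by omega
  have h2 : (i:ℤ) - j ≤ A := by omega
  nlinarith

lemma lattice_rep (m p : ℕ) (hm : 2 ≤ m) (hmsf : Squarefree m) (hp : p.Prime)
    (hpm : ¬ (p ∣ m)) (d c : ℤ) (hd : (m:ℤ) ∣ d ^ 2 + p) (hc : (p:ℤ) ∣ c ^ 2 - m) :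
    ∃ X Y T : ℤ, T ≠ 0 ∧ X ^ 2 + (p:ℤ) * Y ^ 2 = (m:ℤ) * T ^ 2 := by
  have hpinst : Fact p.Prime := ⟨hp⟩
  have hmpos : 0 < m := by omega
  have hppos : 0 < p := hp.pos
  have hm0 : NeZero m := ⟨by omega⟩
  have hp0 : NeZero p := ⟨by omega⟩
  have hcop : Nat.Coprime p m := (Nat.Prime.coprime_iff_not_dvd hp).mpr hpm
  have hmp_sf : Squarefree (m * p) :=
    (Nat.squarefree_mul hcop.symm).mpr ⟨hmsf, hp.squarefree⟩
  have hmp2 : 2 ≤ m * p := by nlinarith [hp.two_le]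
  set a := Nat.sqrt (m * p) + 1 with ha
  set b := Nat.sqrt m + 1 with hb
  set e := Nat.sqrt p + 1 with he
  have hcard : m * p < a * b * e := by
    have h1 : m * p < a ^ 2 := Nat.lt_succ_sqrt' (m * p)
    have h2 : m < b ^ 2 := Nat.lt_succ_sqrt' m
    have h3 : p < e ^ 2 := Nat.lt_succ_sqrt' p
    have h4 : m * p < b ^ 2 * e ^ 2 :=
      mul_lt_mul'' h2 h3 (Nat.zero_le _) (Nat.zero_le _)
    have h5 : (m * p) * (m * p) < a ^ 2 * (b ^ 2 * e ^ 2) :=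
      mul_lt_mul'' h1 h4 (Nat.zero_le _) (Nat.zero_le _)
    have h6 : (m * p) ^ 2 < (a * b * e) ^ 2 := by
      calc (m * p) ^ 2 = (m * p) * (m * p) := by ring
        _ < a ^ 2 * (b ^ 2 * e ^ 2) := h5
        _ = (a * b * e) ^ 2 := by ring
    exact lt_of_pow_lt_pow_left₀ 2 (Nat.zero_le _) h6
  set S : Finset (ℕ × ℕ × ℕ) := Finset.range a ×ˢ Finset.range b ×ˢ Finset.range e with hS
  have hScard : S.card = a * b * e := by simp [hS, mul_assoc]
  set φ : ℕ × ℕ × ℕ → ZMod m × ZMod p := fun t =>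
    (((t.1 : ℤ) - d * t.2.1 : ℤ), ((t.1 : ℤ) - c * t.2.2 : ℤ)) with hφ
  have hcard2 : Fintype.card (ZMod m × ZMod p) < S.card := by
    rw [hScard]; simpa using hcard
  obtain ⟨t₁, ht₁, t₂, ht₂, hne, heq⟩ :=
    Finset.exists_ne_map_eq_of_card_lt_of_maps_to hcard2 (fun x _ => Finset.mem_univ (φ x))
  set z : ℤ := (t₁.1 : ℤ) - t₂.1 with hz
  set u : ℤ := (t₁.2.1 : ℤ) - t₂.2.1 with hu
  set w : ℤ := (t₁.2.2 : ℤ) - t₂.2.2 with hw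
  have hz0 : ¬ (z = 0 ∧ u = 0 ∧ w = 0) := by
    rintro ⟨h1, h2, h3⟩
    apply hne
    have e1 : t₁.1 = t₂.1 := by omega
    have e2 : t₁.2.1 = t₂.2.1 := by omega
    have e3 : t₁.2.2 = t₂.2.2 := by omega
    exact Prod.ext e1 (Prod.ext e2 e3)
  have hcong1 : (m:ℤ) ∣ (z - d * u) := by
    have h' := congrArg Prod.fst heq
    simp only [hφ] at h'
    rw [← sub_eq_zero, ← Int.cast_sub, ZMod.intCast_zmod_eq_zero_iff_dvd] at h'
    have : ((t₁.1 : ℤ) - d * t₁.2.1) - ((t₂.1 : ℤ) - d * t₂.2.1) = z - d * u := by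
      rw [hz, hu]; ring
    rwa [this] at h'
  have hcong2 : (p:ℤ) ∣ (z - c * w) := by
    have h' := congrArg Prod.snd heq
    simp only [hφ] at h'
    rw [← sub_eq_zero, ← Int.cast_sub, ZMod.intCast_zmod_eq_zero_iff_dvd] at h'
    have : ((t₁.1 : ℤ) - c * t₁.2.2) - ((t₂.1 : ℤ) - c * t₂.2.2) = z - c * w := by
      rw [hz, hw]; ring
    rwa [this] at h'
  -- membership bounds
  have hmem : ∀ t : ℕ × ℕ × ℕ, t ∈ S → t.1 < a ∧ t.2.1 < b ∧ t.2.2 < e := by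
    intro t ht
    simp only [hS, Finset.mem_product, Finset.mem_range] at ht
    exact ⟨ht.1, ht.2.1, ht.2.2⟩
  obtain ⟨h1a, h1b, h1e⟩ := hmem t₁ ht₁
  obtain ⟨h2a, h2b, h2e⟩ := hmem t₂ ht₂
  have hzb : z ^ 2 < (m:ℤ) * p := by
    have hle : z ^ 2 ≤ ((Nat.sqrt (m*p) : ℕ) : ℤ) ^ 2 := diff_sq_le _ _ _ h1a h2a
    have h2 : (((Nat.sqrt (m*p) : ℕ) : ℤ)) ^ 2 ≤ ((m * p : ℕ) : ℤ) := by
      exact_mod_cast Nat.sqrt_le' (m * p)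
    have hne' : z ^ 2 ≠ ((m * p : ℕ) : ℤ) := sq_ne_of_squarefree _ hmp_sf hmp2 z
    push_cast at h2 hne' ⊢
    rcases lt_of_le_of_ne (hle.trans h2) hne' with h; exact h
  have hub : u ^ 2 < (m:ℤ) := by
    have hle : u ^ 2 ≤ ((Nat.sqrt m : ℕ) : ℤ) ^ 2 := diff_sq_le _ _ _ h1b h2b
    have h2 : (((Nat.sqrt m : ℕ) : ℤ)) ^ 2 ≤ ((m : ℕ) : ℤ) := by
      exact_mod_cast Nat.sqrt_le' m
    have hne' : u ^ 2 ≠ ((m : ℕ) : ℤ) := sq_ne_of_squarefree _ hmsf hm u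
    exact lt_of_le_of_ne (hle.trans h2) hne'
  have hwb : w ^ 2 < (p:ℤ) := by
    have hle : w ^ 2 ≤ ((Nat.sqrt p : ℕ) : ℤ) ^ 2 := diff_sq_le _ _ _ h1e h2e
    have h2 : (((Nat.sqrt p : ℕ) : ℤ)) ^ 2 ≤ ((p : ℕ) : ℤ) := by
      exact_mod_cast Nat.sqrt_le' p
    have hne' : w ^ 2 ≠ ((p : ℕ) : ℤ) := sq_ne_of_squarefree _ hp.squarefree hp.two_le w
    exact lt_of_le_of_ne (hle.trans h2) hne'
  clear_value z u w
  clear heq hne ht₁ ht₂ hcard hcard2 hScard hmem h1a h1b h1e h2a h2b h2e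
  clear hφ φ hS S hz hu hw t₁ t₂
  -- the quadratic form value
  set F : ℤ := z ^ 2 + p * u ^ 2 - m * w ^ 2 with hF
  have hdm : (m:ℤ) ∣ F := by
    have key : F = (z - d * u) * (z + d * u) + u ^ 2 * (d ^ 2 + p) - m * w ^ 2 := by
      rw [hF]; ring
    rw [key]
    exact dvd_sub (dvd_add (Dvd.dvd.mul_right hcong1 _) (Dvd.dvd.mul_left hd _))
      (Dvd.dvd.mul_right (dvd_refl _) _)
  have hdp : (p:ℤ) ∣ F := by
    have key : F = (z - c * w) * (z + c * w) + w ^ 2 * (c ^ 2 - m) + p * u ^ 2 := by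
      rw [hF]; ring
    rw [key]
    exact dvd_add (dvd_add (Dvd.dvd.mul_right hcong2 _) (Dvd.dvd.mul_left hc _))
      (Dvd.dvd.mul_right (dvd_refl _) _)
  have hdmp : ((m : ℤ) * p) ∣ F := by
    have : IsCoprime (m:ℤ) (p:ℤ) := by
      rw [Int.isCoprime_iff_gcd_eq_one]
      exact_mod_cast hcop.symm
    exact this.mul_dvd hdm hdp
  have hppos' : (0:ℤ) < p := by exact_mod_cast hppos
  have hmpos' : (0:ℤ) < m := by exact_mod_cast hmpos
  have hF01 : F = 0 ∨ F = m * p := by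
    obtain ⟨k, hk⟩ := hdmp
    have hyp1 : (p:ℤ) * u ^ 2 < p * m := by
      exact mul_lt_mul_of_pos_left hub hppos'
    have hyp2 : (m:ℤ) * w ^ 2 < m * p := by
      exact mul_lt_mul_of_pos_left hwb hmpos'
    have hw0 : (0:ℤ) ≤ m * w ^ 2 := by positivity
    have hu0 : (0:ℤ) ≤ p * u ^ 2 := by positivity
    have hz0' : (0:ℤ) ≤ z ^ 2 := sq_nonneg z
    have hbound1 : F < 2 * (m * p) := by rw [hF]; linarith
    have hbound2 : -((m:ℤ) * p) < F := by rw [hF]; linarith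
    have hmppos : (0:ℤ) < (m:ℤ) * p := by positivity
    have hk01 : k = 0 ∨ k = 1 := by
      rcases lt_trichotomy k 0 with h | h | h
      · exfalso
        have : k ≤ -1 := by omega
        have : (m:ℤ) * p * k ≤ (m:ℤ) * p * (-1) := by
          exact mul_le_mul_of_nonneg_left this (le_of_lt hmppos)
        rw [hk] at hbound2; linarith
      · exact Or.inl h
      · rcases lt_trichotomy k 1 with h' | h' | h'
        · omega
        · exact Or.inr h'
        · exfalso
          have : (2:ℤ) ≤ k := by omega
          have : (m:ℤ) * p * 2 ≤ (m:ℤ) * p * k := by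
            exact mul_le_mul_of_nonneg_left this (le_of_lt hmppos)
          rw [hk] at hbound1; linarith
    rcases hk01 with rfl | rfl
    · left; rw [hk]; ring
    · right; rw [hk]; ring
  rcases hF01 with hF0 | hFmp
  · -- z² + p u² = m w²
    have hkey : z ^ 2 + (p:ℤ) * u ^ 2 = m * w ^ 2 := by rw [hF] at hF0; linarith
    refine ⟨z, u, w, ?_, hkey⟩
    intro hw0
    rw [hw0] at hkey
    have hz' : z = 0 := by nlinarith
    have hu' : u = 0 := by nlinarith
    exact hz0 ⟨hz', hu', hw0⟩
  · -- Brahmagupta step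
    have hkey : z ^ 2 + (p:ℤ) * u ^ 2 = m * (w ^ 2 + p) := by rw [hF] at hFmp; linarith
    refine ⟨z * w + p * u, z - u * w, w ^ 2 + p, by positivity, ?_⟩
    linear_combination (w ^ 2 + (p:ℤ)) * hkey

lemma per_prime (q : ℕ) (hq : q.Prime) (hq2 : q ≠ 2) :
    ∃ r : ZMod q, IsUnit r ∧ ∀ p : ℕ, p.Prime → p % 4 = 1 → (p : ZMod q) = r →
      IsSquare ((-(p:ℤ) : ℤ) : ZMod q) ∧
      (∀ (_ : Fact p.Prime), legendreSym p (q : ℤ) = χ₄ (q : ZMod 4)) := by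
  haveI : Fact q.Prime := ⟨hq⟩
  have hchar : ringChar (ZMod q) ≠ 2 := by
    rw [ZMod.ringChar_zmod_n]; exact hq2
  have hq4 : q % 4 = 1 ∨ q % 4 = 3 := by
    have h2 := hq.two_le
    have hodd : q % 2 = 1 := Nat.odd_iff.mp (hq.odd_of_ne_two hq2)
    omega
  obtain ⟨r, hr0, hrval⟩ : ∃ r : ZMod q, r ≠ 0 ∧ quadraticChar (ZMod q) r = χ₄ (q : ZMod 4) := by
    rcases hq4 with h1 | h3
    · refine ⟨1, one_ne_zero, ?_⟩
      rw [map_one, ZMod.χ₄_nat_one_mod_four h1]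
    · obtain ⟨b, hb⟩ := FiniteField.exists_nonsquare hchar
      have hb0 : b ≠ 0 := fun h => hb (h ▸ ⟨0, (mul_zero 0).symm⟩)
      refine ⟨b, hb0, ?_⟩
      rw [quadraticChar_neg_one_iff_not_isSquare.mpr hb, ZMod.χ₄_nat_three_mod_four h3]
  refine ⟨r, (Ne.isUnit hr0), ?_⟩
  intro p hp hp4 hpr
  have hcast : ((p:ℤ) : ZMod q) = r := by rw [Int.cast_natCast, hpr]
  have hA : legendreSym q (p:ℤ) = χ₄ (q : ZMod 4) := by
    rw [legendreSym, hcast, hrval]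
  have hχsq : χ₄ (q : ZMod 4) * χ₄ (q : ZMod 4) = 1 := by
    rcases hq4 with h1 | h3
    · rw [ZMod.χ₄_nat_one_mod_four h1]; norm_num
    · rw [ZMod.χ₄_nat_three_mod_four h3]; norm_num
  constructor
  · have hne : ((-(p:ℤ) : ℤ) : ZMod q) ≠ 0 := by
      push_cast
      rw [hpr]
      exact neg_ne_zero.mpr hr0
    have hval : legendreSym q (-(p:ℤ)) = 1 := by
      have h' : legendreSym q (-(p:ℤ)) = legendreSym q (-1) * legendreSym q (p:ℤ) := by
        rw [← legendreSym.mul]; norm_num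
      rw [h', legendreSym.at_neg_one hq2, hA, hχsq]
    exact (legendreSym.eq_one_iff q hne).mp hval
  · intro hfp
    rw [← legendreSym.quadratic_reciprocity_one_mod_four hp4 hq2, hA]

lemma crt_residue : ∀ m : ℕ, Squarefree m → m % 2 = 1 →
    ∃ R : ZMod m, IsUnit R ∧ ∀ p : ℕ, p.Prime → p % 4 = 1 → (p : ZMod m) = R →
      IsSquare ((-(p:ℤ) : ℤ) : ZMod m) ∧
      (∀ (_ : Fact p.Prime), legendreSym p (m : ℤ) = χ₄ (m : ZMod 4)) := by
  intro m
  induction m using Nat.strong_induction_on with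
  | _ m IH =>
    intro hsf hodd
    rcases eq_or_ne m 1 with rfl | hm1
    · refine ⟨0, isUnit_of_subsingleton 0, ?_⟩
      intro p hp hp4 hpR
      refine ⟨⟨0, Subsingleton.elim _ _⟩, ?_⟩
      intro hfp
      simp [legendreSym]
    · -- m = q * k
      have hm0 : m ≠ 0 := fun h => not_squarefree_zero (h ▸ hsf)
      obtain ⟨q, hq, hqdvd⟩ : ∃ q : ℕ, q.Prime ∧ q ∣ m :=
        ⟨m.minFac, Nat.minFac_prime hm1, Nat.minFac_dvd m⟩
      obtain ⟨k, hk⟩ := hqdvd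
      have hq2' : q ≠ 2 := by
        intro h2
        rw [h2] at hk
        omega
      have hqpos : 0 < q := hq.pos
      have hkpos : 0 < k := by
        rcases Nat.eq_zero_or_pos k with h | h
        · rw [h, mul_zero] at hk; exact absurd hk hm0
        · exact h
      have hco : Nat.Coprime q k := by
        rw [Nat.Prime.coprime_iff_not_dvd hq]
        intro hqk
        obtain ⟨j, hj⟩ := hqk
        have : q * q ∣ m := ⟨j, by rw [hk, hj]; ring⟩
        exact hq.not_isUnit (hsf q this)
      have hksf : Squarefree k := hsf.squarefree_of_dvd ⟨q, by rw [hk]; ring⟩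
      have hkodd : k % 2 = 1 := by
        rcases Nat.even_or_odd k with he | ho
        · exfalso
          obtain ⟨j, hj⟩ := he
          have : 2 ∣ m := ⟨q * j, by rw [hk, hj]; ring⟩
          omega
        · exact Nat.odd_iff.mp ho
      have hklt : k < m := by
        have : 2 ≤ q := hq.two_le
        nlinarith
      obtain ⟨R₂, hR₂u, hR₂⟩ := IH k hklt hksf hkodd
      obtain ⟨r₁, hr₁u, hr₁⟩ := per_prime q hq hq2'
      subst hk
      set e := ZMod.chineseRemainder hco with he
      refine ⟨e.symm (r₁, R₂), ?_, ?_⟩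
      · obtain ⟨u1, hu1⟩ := hr₁u
        obtain ⟨u2, hu2⟩ := hR₂u
        have : IsUnit ((r₁, R₂) : ZMod q × ZMod k) := by
          refine IsUnit.of_mul_eq_one ((↑u1⁻¹ : ZMod q), (↑u2⁻¹ : ZMod k)) ?_
          rw [← hu1, ← hu2]
          exact Prod.ext (u1.mul_inv) (u2.mul_inv)
        exact this.map e.symm.toRingHom
      · intro p hp hp4 hpR
        -- components
        have hcomp : e ((p : ZMod (q * k))) = ((p : ZMod q), (p : ZMod k)) := by
          rw [map_natCast]
          exact Prod.ext (by simp) (by simp)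
        have hpq : (p : ZMod q) = r₁ := by
          have h' := hpR
          have : e ((p : ZMod (q*k))) = (r₁, R₂) := by
            rw [h', RingEquiv.apply_symm_apply]
          rw [hcomp] at this
          exact congrArg Prod.fst this
        have hpk : (p : ZMod k) = R₂ := by
          have : e ((p : ZMod (q*k))) = (r₁, R₂) := by
            rw [hpR, RingEquiv.apply_symm_apply]
          rw [hcomp] at this
          exact congrArg Prod.snd this
        obtain ⟨hsq1, hleg1⟩ := hr₁ p hp hp4 hpq
        obtain ⟨hsq2, hleg2⟩ := hR₂ p hp hp4 hpk
        constructor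
        · obtain ⟨s₁, hs₁⟩ := hsq1
          obtain ⟨s₂, hs₂⟩ := hsq2
          refine ⟨e.symm (s₁, s₂), ?_⟩
          apply e.injective
          rw [map_mul, RingEquiv.apply_symm_apply, map_intCast]
          have : ((-(p:ℤ) : ℤ) : ZMod q × ZMod k) = (((-(p:ℤ) : ℤ) : ZMod q), ((-(p:ℤ) : ℤ) : ZMod k)) := by
            exact Prod.ext (by simp) (by simp)
          rw [this, hs₁, hs₂]
          rfl
        · intro hfp
          have hmul : ((q * k : ℕ) : ℤ) = (q : ℤ) * (k : ℤ) := by push_cast; ring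
          rw [hmul, legendreSym.mul, hleg1 hfp, hleg2 hfp]
          have hc4 : ((q * k : ℕ) : ZMod 4) = ((q : ℕ) : ZMod 4) * ((k : ℕ) : ZMod 4) := by
            push_cast; ring
          rw [hc4, map_mul]

lemma isSquare_crt (a b : ℕ) (hco : Nat.Coprime a b) (x : ℤ)
    (h1 : IsSquare ((x : ℤ) : ZMod a)) (h2 : IsSquare ((x : ℤ) : ZMod b)) :
    IsSquare ((x : ℤ) : ZMod (a * b)) := by
  set e := ZMod.chineseRemainder hco with he
  obtain ⟨s₁, hs₁⟩ := h1
  obtain ⟨s₂, hs₂⟩ := h2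
  refine ⟨e.symm (s₁, s₂), ?_⟩
  apply e.injective
  rw [map_mul, RingEquiv.apply_symm_apply, map_intCast]
  have : ((x : ℤ) : ZMod a × ZMod b) = (((x:ℤ) : ZMod a), ((x:ℤ) : ZMod b)) :=
    Prod.ext (by simp) (by simp)
  rw [this, hs₁, hs₂]
  rfl

lemma isUnit_pair {a b : ℕ} {r₁ : ZMod a} {r₂ : ZMod b} (h1 : IsUnit r₁) (h2 : IsUnit r₂) :
    IsUnit ((r₁, r₂) : ZMod a × ZMod b) := by
  obtain ⟨u1, hu1⟩ := h1
  obtain ⟨u2, hu2⟩ := h2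
  refine IsUnit.of_mul_eq_one ((↑u1⁻¹ : ZMod a), (↑u2⁻¹ : ZMod b)) ?_
  rw [← hu1, ← hu2]
  exact Prod.ext (u1.mul_inv) (u2.mul_inv)

lemma exists_int_sqrt (m : ℕ) (hm : 0 < m) (x : ℤ) (h : IsSquare ((x : ℤ) : ZMod m)) :
    ∃ d : ℤ, (m:ℤ) ∣ d ^ 2 - x := by
  haveI : NeZero m := ⟨hm.ne'⟩
  obtain ⟨r, hr⟩ := h
  refine ⟨(r.val : ℤ), ?_⟩
  rw [← ZMod.intCast_zmod_eq_zero_iff_dvd]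
  push_cast
  have hv : ((r.val : ℕ) : ZMod m) = r := ZMod.natCast_rightInverse r
  rw [hv, hr]
  ring

lemma exists_good_prime (m : ℕ) (hm : 2 ≤ m) (hsf : Squarefree m)
    (hmod : m % 4 = 1 ∨ m % 4 = 2) :
    ∃ p : ℕ, p.Prime ∧ p % 4 = 1 ∧ m < p ∧
      IsSquare (((m:ℕ) : ℤ) : ZMod p) ∧ IsSquare ((-(p:ℤ) : ℤ) : ZMod m) := by
  rcases hmod with hmod1 | hmod2
  · -- m odd, ≡ 1 mod 4
    have hodd : m % 2 = 1 := by omega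
    obtain ⟨R, hRu, hR⟩ := crt_residue m hsf hodd
    have h2co : Nat.Coprime 2 m := by
      rw [Nat.prime_two.coprime_iff_not_dvd]
      intro ⟨j, hj⟩; omega
    have hco : Nat.Coprime 4 m := by
      have := h2co.pow_left 2
      norm_num at this
      exact this
    set e := ZMod.chineseRemainder hco with he
    haveI : NeZero (4 * m) := ⟨by omega⟩
    have hAu : IsUnit (e.symm ((1 : ZMod 4), R)) :=
      (isUnit_pair isUnit_one hRu).map e.symm.toRingHom
    obtain ⟨p, hpgt, hpp, hpa⟩ := Nat.forall_exists_prime_gt_and_eq_mod hAu m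
    have hcomp : e ((p : ZMod (4 * m))) = ((p : ZMod 4), (p : ZMod m)) := by
      rw [map_natCast]
      exact Prod.ext (by simp) (by simp)
    have hpair : ((p : ZMod 4), (p : ZMod m)) = ((1 : ZMod 4), R) := by
      rw [← hcomp, hpa, RingEquiv.apply_symm_apply]
    have hp4' : (p : ZMod 4) = ((1:ℕ) : ZMod 4) := by
      have := congrArg Prod.fst hpair; simpa using this
    have hp4 : p % 4 = 1 := by
      have := (ZMod.natCast_eq_natCast_iff' p 1 4).mp hp4'
      omega
    have hpR : (p : ZMod m) = R := congrArg Prod.snd hpair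
    haveI hfp : Fact p.Prime := ⟨hpp⟩
    obtain ⟨hsqneg, hleg⟩ := hR p hpp hp4 hpR
    have hlegval : legendreSym p (m : ℤ) = 1 := by
      rw [hleg hfp, ZMod.χ₄_nat_one_mod_four hmod1]
    have hpm : ¬ (p ∣ m) := Nat.not_dvd_of_pos_of_lt (by omega) hpgt
    have hne : (((m:ℕ) : ℤ) : ZMod p) ≠ 0 := by
      rw [Int.cast_natCast, Ne, ZMod.natCast_eq_zero_iff]
      exact hpm
    exact ⟨p, hpp, hp4, hpgt, (legendreSym.eq_one_iff p hne).mp hlegval, hsqneg⟩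
  · -- m ≡ 2 mod 4
    obtain ⟨m', hm'⟩ : ∃ m', m = 2 * m' := ⟨m / 2, by omega⟩
    have hm'odd : m' % 2 = 1 := by omega
    have hm'sf : Squarefree m' := hsf.squarefree_of_dvd ⟨2, by omega⟩
    obtain ⟨R, hRu, hR⟩ := crt_residue m' hm'sf hm'odd
    have h2co : Nat.Coprime 2 m' := by
      rw [Nat.prime_two.coprime_iff_not_dvd]
      intro ⟨j, hj⟩; omega
    have hco : Nat.Coprime 8 m' := by
      have := h2co.pow_left 3
      norm_num at this
      exact this
    set e := ZMod.chineseRemainder hco with he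
    haveI : NeZero (8 * m') := ⟨by omega⟩
    have hm'4 : m' % 4 = 1 ∨ m' % 4 = 3 := by omega
    -- choose s
    set s : ℕ := if m' % 4 = 1 then 1 else 5 with hs
    have hsu : IsUnit ((s : ℕ) : ZMod 8) := by
      rcases hm'4 with h | h <;> simp [hs, h] <;> decide
    have hAu : IsUnit (e.symm (((s:ℕ) : ZMod 8), R)) :=
      (isUnit_pair hsu hRu).map e.symm.toRingHom
    obtain ⟨p, hpgt, hpp, hpa⟩ := Nat.forall_exists_prime_gt_and_eq_mod hAu m
    have hcomp : e ((p : ZMod (8 * m'))) = ((p : ZMod 8), (p : ZMod m')) := by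
      rw [map_natCast]
      exact Prod.ext (by simp) (by simp)
    have hpair : ((p : ZMod 8), (p : ZMod m')) = (((s:ℕ) : ZMod 8), R) := by
      rw [← hcomp, hpa, RingEquiv.apply_symm_apply]
    have hp8' : (p : ZMod 8) = ((s:ℕ) : ZMod 8) := congrArg Prod.fst hpair
    have hp8 : p % 8 = s % 8 := (ZMod.natCast_eq_natCast_iff' p s 8).mp hp8'
    have hsval : s = 1 ∨ s = 5 := by
      rcases hm'4 with h | h <;> simp [hs, h]
    have hp4 : p % 4 = 1 := by rcases hsval with h | h <;> omega
    have hpR : (p : ZMod m') = R := congrArg Prod.snd hpair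
    haveI hfp : Fact p.Prime := ⟨hpp⟩
    obtain ⟨hsqneg', hleg⟩ := hR p hpp hp4 hpR
    have hp2 : p ≠ 2 := by
      rcases hsval with h | h <;> omega
    -- legendreSym p m = χ₈ p * χ₄ m' = 1
    have hlegval : legendreSym p (m : ℤ) = 1 := by
      have hcast : ((m:ℕ) : ℤ) = 2 * ((m' : ℕ) : ℤ) := by
        rw [hm']; push_cast; ring
      rw [hcast, legendreSym.mul, legendreSym.at_two hp2, hleg hfp]
      rw [ZMod.χ₈_nat_eq_if_mod_eight, ZMod.χ₄_nat_eq_if_mod_four]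
      rcases hm'4 with h | h
      · have hs1 : s = 1 := by simp [hs, h]
        have : p % 8 = 1 := by omega
        have hp2' : p % 2 = 1 := by omega
        rw [h, this]
        norm_num [hp2', hm'odd]
      · have hs5 : s = 5 := by simp [hs, h]
        have : p % 8 = 5 := by omega
        have hp2' : p % 2 = 1 := by omega
        rw [h, this]
        norm_num [hp2', hm'odd]
    have hpm : ¬ (p ∣ m) := Nat.not_dvd_of_pos_of_lt (by omega) hpgt
    have hne : (((m:ℕ) : ℤ) : ZMod p) ≠ 0 := by
      rw [Int.cast_natCast, Ne, ZMod.natCast_eq_zero_iff]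
      exact hpm
    have hsq2 : IsSquare ((-(p:ℤ) : ℤ) : ZMod 2) := by
      have : ∀ x : ZMod 2, IsSquare x := by decide
      exact this _
    have hsqm : IsSquare ((-(p:ℤ) : ℤ) : ZMod m) := by
      rw [hm']
      exact isSquare_crt 2 m' h2co _ hsq2 hsqneg'
    exact ⟨p, hpp, hp4, hpgt, (legendreSym.eq_one_iff p hne).mp hlegval, hsqm⟩

theorem three_squares (n : ℕ) (hn : 0 < n) (h : n % 4 = 1 ∨ n % 4 = 2) :
    ∃ x y z : ℤ, x ^ 2 + y ^ 2 + z ^ 2 = (n : ℤ) := by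
  obtain ⟨a, b, hab, hsf⟩ := Nat.sq_mul_squarefree n
  have ha0 : 0 < a := by
    rcases Nat.eq_zero_or_pos a with h0 | h0
    · rw [h0, mul_zero] at hab; omega
    · exact h0
  have hb0 : 0 < b := by
    rcases Nat.eq_zero_or_pos b with h0 | h0
    · rw [h0] at hab; simp at hab; omega
    · exact h0
  have hbodd : b % 2 = 1 := by
    rcases Nat.even_or_odd b with ⟨j, hj⟩ | ho
    · exfalso
      have : n = 4 * (j ^ 2 * a) := by rw [← hab, hj]; ring
      omega
    · exact Nat.odd_iff.mp ho
  have hamod : a % 4 = n % 4 := by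
    obtain ⟨j, hj⟩ : ∃ j, b = 2 * j + 1 := ⟨b / 2, by omega⟩
    have : n = 4 * ((j ^ 2 + j) * a) + a := by rw [← hab, hj]; ring
    omega
  have key : ∃ x y z : ℤ, x ^ 2 + y ^ 2 + z ^ 2 = (a : ℤ) := by
    rcases eq_or_ne a 1 with rfl | ha1
    · exact ⟨1, 0, 0, by norm_num⟩
    rcases eq_or_ne a 2 with rfl | ha2
    · exact ⟨1, 1, 0, by norm_num⟩
    have ha2' : 2 ≤ a := by omega
    obtain ⟨p, hpp, hp4, hap, hsqa, hsqneg⟩ :=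
      exists_good_prime a ha2' hsf (by omega)
    obtain ⟨d, hd⟩ := exists_int_sqrt a ha0 (-(p:ℤ)) hsqneg
    rw [sub_neg_eq_add] at hd
    obtain ⟨c, hc⟩ := exists_int_sqrt p hpp.pos ((a:ℕ) : ℤ) hsqa
    have hpa : ¬ (p ∣ a) := Nat.not_dvd_of_pos_of_lt ha0 hap
    obtain ⟨X, Y, T, hT, hXY⟩ := lattice_rep a p ha2' hsf hpp hpa d c hd hc
    haveI : Fact p.Prime := ⟨hpp⟩
    obtain ⟨α, β, hαβ⟩ := Nat.Prime.sq_add_sq (p := p) (by omega)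
    have hsum : X ^ 2 + ((α:ℤ) * Y) ^ 2 + ((β:ℤ) * Y) ^ 2 = (a:ℤ) * T ^ 2 := by
      have hcast : ((α:ℤ) ^ 2 + (β:ℤ) ^ 2) = (p : ℤ) := by exact_mod_cast congrArg (Nat.cast : ℕ → ℤ) hαβ
      linear_combination hXY + Y ^ 2 * hcast
    exact aubry_descent (a:ℤ) T.natAbs T rfl hT _ _ _ hsum
  obtain ⟨x, y, z, hxyz⟩ := key
  refine ⟨b * x, b * y, b * z, ?_⟩
  have : ((n:ℕ) : ℤ) = (b:ℤ) ^ 2 * (a:ℤ) := by exact_mod_cast (congrArg (Nat.cast : ℕ → ℤ) hab).symm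
  rw [this]
  linear_combination (b:ℤ) ^ 2 * hxyz

lemma norm_odd (U W : ℤ) (hodd : Odd (U ^ 2 + U * W + W ^ 2)) :
    ∃ U' W' : ℤ, U ^ 2 + U * W + W ^ 2 = U' ^ 2 + U' * W' + W' ^ 2 ∧ Odd W' := by
  rcases Int.even_or_odd W with hW | hW
  · rcases Int.even_or_odd U with hU | hU
    · exfalso
      obtain ⟨u, hu⟩ := hU
      obtain ⟨w, hw⟩ := hW
      obtain ⟨l, hl⟩ := hodd
      have : U ^ 2 + U * W + W ^ 2 = 2 * (2 * u ^ 2 + 2 * u * w + 2 * w ^ 2) := by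
        rw [hu, hw]; ring
      omega
    · exact ⟨W, U, by ring, hU⟩
  · exact ⟨U, W, rfl, hW⟩

theorem stmt_3 (n : ℕ) (hn : 0 < n) (h : n % 8 = 4 ∨ n % 8 = 6) :
    ∃ a₁ a₂ a₃ : ℤ, a₁ ^ 2 + 2 * a₂ ^ 2 + 3 * a₃ ^ 2 = (n : ℤ) ∧ Odd a₁ ∧ Odd a₃ := by
  rcases h with h4 | h6
  · -- n ≡ 4 mod 8
    obtain ⟨M, hM⟩ : ∃ M, n = 4 * M := ⟨n / 4, by omega⟩
    have hModd : M % 2 = 1 := by omega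
    obtain ⟨x, y, z, hxyz⟩ := three_squares (6 * M) (by omega) (by omega)
    have hcast : ((6 * M : ℕ) : ℤ) = 3 * (2 * (M : ℤ)) := by push_cast; ring
    rw [hcast] at hxyz
    obtain ⟨s, U, W, hrep⟩ := key1 (2 * (M : ℤ)) x y z hxyz
    -- s is even
    obtain ⟨d, hd⟩ : ∃ d, s = 2 * d := by
      rcases Int.even_or_odd s with ⟨d, hd⟩ | ⟨d, hd⟩
      · exact ⟨d, by omega⟩
      · exfalso
        obtain ⟨A, hA⟩ : ∃ A, A = d ^ 2 := ⟨_, rfl⟩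
        obtain ⟨L, hL⟩ : ∃ L, L = U ^ 2 + U * W + W ^ 2 := ⟨_, rfl⟩
        have e : 2 * (M:ℤ) = 4 * A + 4 * d + 1 + 2 * L := by
          rw [hrep, hd, hA, hL]; ring
        omega
    have hLodd : Odd (U ^ 2 + U * W + W ^ 2) := by
      obtain ⟨A, hA⟩ : ∃ A, A = d ^ 2 := ⟨_, rfl⟩
      obtain ⟨L, hL⟩ : ∃ L, L = U ^ 2 + U * W + W ^ 2 := ⟨_, rfl⟩
      have e : 2 * (M:ℤ) = 4 * A + 2 * L := by rw [hrep, hd, hA, hL]; ring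
      have hL2 : L % 2 = 1 := by omega
      rw [hL] at hL2
      exact ⟨(U ^ 2 + U * W + W ^ 2 - 1) / 2, by omega⟩
    obtain ⟨U', W', hUW, hW'⟩ := norm_odd U W hLodd
    obtain ⟨k, hk⟩ := hW'
    refine ⟨2 * U' + W', 2 * d, W', ?_, ⟨U' + k, by omega⟩, ⟨k, hk⟩⟩
    have : (n : ℤ) = 2 * (2 * (M : ℤ)) := by rw [hM]; push_cast; ring
    rw [this, hrep, hUW, hd]
    ring
  · -- n ≡ 6 mod 8
    obtain ⟨M, hM⟩ : ∃ M, n = 2 * M := ⟨n / 2, by omega⟩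
    have hM4 : M % 4 = 3 := by omega
    obtain ⟨x, y, z, hxyz⟩ := three_squares (3 * M) (by omega) (by omega)
    have hcast : ((3 * M : ℕ) : ℤ) = 3 * (M : ℤ) := by push_cast; ring
    rw [hcast] at hxyz
    obtain ⟨s, U, W, hrep⟩ := key1 ((M : ℤ)) x y z hxyz
    have hLodd : Odd (U ^ 2 + U * W + W ^ 2) := by
      obtain ⟨L, hL⟩ : ∃ L, L = U ^ 2 + U * W + W ^ 2 := ⟨_, rfl⟩
      rcases Int.even_or_odd s with ⟨σ, hσ⟩ | ⟨σ, hσ⟩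
      · exfalso
        obtain ⟨A, hA⟩ : ∃ A, A = σ ^ 2 := ⟨_, rfl⟩
        have e : (M:ℤ) = 4 * A + 2 * L := by rw [hrep, hσ, hA, hL]; ring
        omega
      · obtain ⟨A, hA⟩ : ∃ A, A = σ ^ 2 := ⟨_, rfl⟩
        have e : (M:ℤ) = 4 * A + 4 * σ + 1 + 2 * L := by rw [hrep, hσ, hA, hL]; ring
        have hL2 : L % 2 = 1 := by omega
        rw [hL] at hL2
        exact ⟨(U ^ 2 + U * W + W ^ 2 - 1) / 2, by omega⟩
    obtain ⟨U', W', hUW, hW'⟩ := norm_odd U W hLodd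
    obtain ⟨k, hk⟩ := hW'
    refine ⟨2 * U' + W', s, W', ?_, ⟨U' + k, by omega⟩, ⟨k, hk⟩⟩
    have : (n : ℤ) = 2 * (M : ℤ) := by rw [hM]; push_cast; ring
    rw [this, hrep, hUW]
    ring
end

section
/- Let n be a positive integer represented by the form x² + 2y² + 4z². Then there exist representations n = x₁² + 2y₁² + 4z₁² with z₁ odd and n = x₂² + 2y₂² + 4z₂² with z₂ even if and only if n ≡ 4 (mod 8), or n ≡ 6 (mod 16), or n ≡ 8 (mod 32), or n ≡ 16 (mod 32). -/
/-!
Write `Q = x² + 2y² + 4z²`. Reducing `Q` modulo 32 according to the classes of `x, y, z` modulo 4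
shows that a representation with `z` odd and one with `z` even can coexist only in the four listed
classes. Conversely, in those classes a representation of the other parity is obtained by an
identity of the form. For `n ≡ 4 (mod 8)` and `n ≡ 6 (mod 16)` every representation has
`x = 2a` with `a + z` odd, and swapping `a` and `z` flips the parity of `z`. For `8 ∣ n`, every
representation comes from `n = 8(u² + v² + w²)` through
`(2(u + v))² + 2(2w)² + 4(u - v)² = 8(u² + v² + w²)`; this makes the parity of `z` that of
`u - v`, and permuting `u, v, w` realises both parities exactly when `u, v, w` are not all of the
same parity, i.e. when `n / 8 ≡ 1, 2 (mod 4)`.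
-/

def HasRepr (n : ℤ) (p : ℤ → Prop) : Prop :=
  ∃ x y z : ℤ, x ^ 2 + 2 * y ^ 2 + 4 * z ^ 2 = n ∧ p z

theorem sq_emod_cases (x : ℤ) :
    (x % 2 = 1 ∧ x ^ 2 % 8 = 1) ∨ (x % 4 = 2 ∧ x ^ 2 % 32 = 4) ∨
      (x % 4 = 0 ∧ x ^ 2 % 16 = 0) := by
  rcases Int.emod_two_eq x with hx | hx
  · obtain ⟨a, rfl⟩ : ∃ a, x = 2 * a := ⟨x / 2, by omega⟩
    rcases Int.emod_two_eq a with ha | ha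
    · obtain ⟨b, rfl⟩ : ∃ b, a = 2 * b := ⟨a / 2, by omega⟩
      right; right
      exact ⟨by omega, by ring_nf; omega⟩
    · have h8 := Int.eight_dvd_sq_sub_one_of_odd (Int.odd_iff.mpr ha)
      right; left
      exact ⟨by omega, by ring_nf; omega⟩
  · have h8 := Int.eight_dvd_sq_sub_one_of_odd (Int.odd_iff.mpr hx)
    left
    exact ⟨hx, by omega⟩

theorem emod_of_hasRepr_odd {n : ℤ} (h : HasRepr n Odd) :
    n % 8 = 5 ∨ n % 8 = 7 ∨ n % 16 = 10 ∨
      n % 8 = 4 ∨ n % 16 = 6 ∨ n % 32 = 8 ∨ n % 32 = 16 := by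
  obtain ⟨x, y, z, rfl, hz⟩ := h
  rw [Int.odd_iff] at hz
  have := sq_emod_cases x
  have := sq_emod_cases y
  have := sq_emod_cases z
  omega

theorem emod_of_hasRepr_even {n : ℤ} (h : HasRepr n Even) :
    n % 8 = 1 ∨ n % 8 = 3 ∨ n % 16 = 2 ∨ n % 16 = 6 ∨ n % 4 = 0 := by
  obtain ⟨x, y, z, rfl, hz⟩ := h
  rw [Int.even_iff] at hz
  have := sq_emod_cases x
  have := sq_emod_cases y
  have := sq_emod_cases z
  omega

theorem hasRepr_odd_and_even_of_odd_add {n a y z : ℤ}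
    (h : (2 * a) ^ 2 + 2 * y ^ 2 + 4 * z ^ 2 = n) (haz : Odd (a + z)) :
    HasRepr n Odd ∧ HasRepr n Even := by
  have hswap : (2 * z) ^ 2 + 2 * y ^ 2 + 4 * a ^ 2 = n := by rw [← h]; ring
  rcases Int.even_or_odd z with hz | hz
  · exact ⟨⟨2 * z, y, a, hswap, (Int.odd_add.mp haz).mpr hz⟩, ⟨2 * a, y, z, h, hz⟩⟩
  · exact ⟨⟨2 * a, y, z, h, hz⟩, ⟨2 * z, y, a, hswap, (Int.odd_add'.mp haz).mp hz⟩⟩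

theorem hasRepr_eight_mul_sum_sq {m : ℤ} (a b c : ℤ) (habc : a ^ 2 + b ^ 2 + c ^ 2 = m)
    {p : ℤ → Prop} (hp : p (a - b)) : HasRepr (8 * m) p :=
  ⟨2 * (a + b), 2 * c, a - b, by rw [← habc]; ring, hp⟩

theorem hasRepr_odd_and_even_eight_mul {u v w : ℤ}
    (hm : (u ^ 2 + v ^ 2 + w ^ 2) % 4 = 1 ∨ (u ^ 2 + v ^ 2 + w ^ 2) % 4 = 2) :
    HasRepr (8 * (u ^ 2 + v ^ 2 + w ^ 2)) Odd ∧ HasRepr (8 * (u ^ 2 + v ^ 2 + w ^ 2)) Even := by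
  constructor
  · by_cases huv : Odd (u - v)
    · exact hasRepr_eight_mul_sum_sq u v w rfl huv
    by_cases hvw : Odd (v - w)
    · exact hasRepr_eight_mul_sum_sq v w u (by ring) hvw
    -- `u, v, w` all have the same parity, so `u² + v² + w² ≡ 0, 3 (mod 4)`
    rw [Int.not_odd_iff] at huv hvw
    have := sq_emod_cases u
    have := sq_emod_cases v
    have := sq_emod_cases w
    omega
  · by_cases huv : Even (u - v)
    · exact hasRepr_eight_mul_sum_sq u v w rfl huv
    by_cases hvw : Even (v - w)
    · exact hasRepr_eight_mul_sum_sq v w u (by ring) hvw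
    rw [Int.not_even_iff] at huv hvw
    exact hasRepr_eight_mul_sum_sq u w v (by ring) (Int.even_iff.mpr (by omega))

theorem exists_two_mul_odd_add_of_repr {n x y z : ℤ} (h : x ^ 2 + 2 * y ^ 2 + 4 * z ^ 2 = n)
    (hn : n % 8 = 4 ∨ n % 16 = 6) : ∃ a, x = 2 * a ∧ Odd (a + z) := by
  have := sq_emod_cases x
  have := sq_emod_cases y
  have := sq_emod_cases z
  exact ⟨x / 2, by omega, Int.odd_iff.mpr (by omega)⟩

theorem exists_eq_eight_mul_sum_sq_of_repr {n x y z : ℤ}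
    (h : x ^ 2 + 2 * y ^ 2 + 4 * z ^ 2 = n) (hn : n % 8 = 0) :
    ∃ u v w : ℤ, n = 8 * (u ^ 2 + v ^ 2 + w ^ 2) := by
  have := sq_emod_cases x
  have := sq_emod_cases y
  have := sq_emod_cases z
  obtain ⟨b, rfl⟩ : ∃ b, y = 2 * b := ⟨y / 2, by omega⟩
  obtain ⟨u, v, rfl, rfl⟩ : ∃ u v, x = 2 * (u + v) ∧ z = u - v :=
    ⟨(x / 2 + z) / 2, (x / 2 - z) / 2, by omega, by omega⟩
  exact ⟨u, v, b, by rw [← h]; ring⟩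

theorem hasRepr_odd_and_even_of_emod {n x y z : ℤ} (h : x ^ 2 + 2 * y ^ 2 + 4 * z ^ 2 = n)
    (hn : n % 8 = 4 ∨ n % 16 = 6 ∨ n % 32 = 8 ∨ n % 32 = 16) :
    HasRepr n Odd ∧ HasRepr n Even := by
  by_cases h46 : n % 8 = 4 ∨ n % 16 = 6
  · obtain ⟨a, rfl, haz⟩ := exists_two_mul_odd_add_of_repr h h46
    exact hasRepr_odd_and_even_of_odd_add h haz
  · obtain ⟨u, v, w, rfl⟩ := exists_eq_eight_mul_sum_sq_of_repr h (by omega)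
    exact hasRepr_odd_and_even_eight_mul (by omega)

theorem stmt_4_general (n : ℕ)
    (hrep : ∃ x y z : ℤ, x ^ 2 + 2 * y ^ 2 + 4 * z ^ 2 = (n : ℤ)) :
    ((∃ x₁ y₁ z₁ : ℤ, x₁ ^ 2 + 2 * y₁ ^ 2 + 4 * z₁ ^ 2 = (n : ℤ) ∧ Odd z₁) ∧
      (∃ x₂ y₂ z₂ : ℤ, x₂ ^ 2 + 2 * y₂ ^ 2 + 4 * z₂ ^ 2 = (n : ℤ) ∧ Even z₂)) ↔
      (n % 8 = 4 ∨ n % 16 = 6 ∨ n % 32 = 8 ∨ n % 32 = 16) := by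
  constructor
  · rintro ⟨hodd, heven⟩
    have := emod_of_hasRepr_odd hodd
    have := emod_of_hasRepr_even heven
    omega
  · intro hn
    obtain ⟨x, y, z, h⟩ := hrep
    exact hasRepr_odd_and_even_of_emod h (by omega)

theorem stmt_4 (n : ℕ) (hn : 0 < n)
    (hrep : ∃ x y z : ℤ, x ^ 2 + 2 * y ^ 2 + 4 * z ^ 2 = (n : ℤ)) :
    ((∃ x₁ y₁ z₁ : ℤ, x₁ ^ 2 + 2 * y₁ ^ 2 + 4 * z₁ ^ 2 = (n : ℤ) ∧ Odd z₁) ∧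
      (∃ x₂ y₂ z₂ : ℤ, x₂ ^ 2 + 2 * y₂ ^ 2 + 4 * z₂ ^ 2 = (n : ℤ) ∧ Even z₂)) ↔
      (n % 8 = 4 ∨ n % 16 = 6 ∨ n % 32 = 8 ∨ n % 32 = 16) :=
  stmt_4_general n hrep
end

section
/- The quaternary quadratic form x² + y² + 2z² + 4w² + 2zw is primitively universal: for every positive integer n there exist integers x, y, z, w with gcd(x,y,z,w) = 1 and x² + y² + 2z² + 4w² + 2zw = n. -/
/-!
For `n ≡ 3 (mod 4)` take `z = 1`: then `4n - 7 = (2x)² + (2y)² + (4w + 1)²`; otherwise take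
`w = 1`: then `2n - 7 = 2(x² + y²) + (2z + 1)²`. In both cases a coordinate equals `1`, so the
representation is primitive, and the numbers `4n - 7`, `2n - 7` are odd and `≢ 7 (mod 8)`, hence
sums of three squares, which can be rearranged into the required shape by a parity argument.

The three-square theorem for odd `N ≢ 7 (mod 8)` goes through ternary forms. A prime
`p ≡ 1 (mod 4)` from Dirichlet's theorem with `N ∣ mp + 1` (`m = 1` or `2`), together with quadratic
reciprocity, gives `s` with `mp ∣ s² + (mp + 1) / N`; this makes `N` the value at `e₀` of a positive
integral ternary form of determinant `1`. A form of minimal trace in its `SL₃(ℤ)`-class cannot be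
shortened by replacing a basis vector `eⱼ` by any `v` with `vⱼ = 1`; for such a form with diagonal
`a ≤ b ≤ c` one has `abc ≤ 4 det`, which for determinant `1` forces the form `x² + y² + z²`.
-/

open Matrix
open scoped NumberTheorySymbols

section Inequalities

variable {R : Type*} [CommRing R] [LinearOrder R] [IsStrictOrderedRing R]

theorem two_mul_sq_le_mul {a x : R} (hx : 0 ≤ x) (h : 2 * x ≤ a) : 2 * x ^ 2 ≤ a * x := by
  nlinarith

theorem mul_mul_le_four_mul_det {a b c d e f : R} (hab : a ≤ b) (hbc : b ≤ c)
    (hd : 2 * |d| ≤ a) (he : 2 * |e| ≤ a) (hf : 2 * |f| ≤ b)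
    (hneg : d * e * f < 0 → 2 * (|d| + |e| + |f|) ≤ a + b) :
    a * b * c ≤ 4 * (a * b * c + 2 * d * e * f - a * f ^ 2 - b * e ^ 2 - c * d ^ 2) := by
  have ha : 0 ≤ a := (mul_nonneg zero_le_two (abs_nonneg d)).trans hd
  have hb : 0 ≤ b := ha.trans hab
  have hc : 0 ≤ c := hb.trans hbc
  have hd' := mul_le_mul_of_nonneg_left (two_mul_sq_le_mul (abs_nonneg d) hd) hc
  have he' := mul_le_mul_of_nonneg_left (two_mul_sq_le_mul (abs_nonneg e) he) hb
  have hf' := mul_le_mul_of_nonneg_left (two_mul_sq_le_mul (abs_nonneg f) hf) ha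
  -- Each of `c d²`, `b e²`, `a f²` is at most `abc / 4`. When `def < 0`, instead
  -- `c d² + b e² + a f² ≤ ac (|d| + |e| + |f|) / 2 ≤ abc / 2` and `8 |def| ≤ a²c ≤ abc`.
  rw [← sq_abs d, ← sq_abs e, ← sq_abs f]
  rcases le_or_gt 0 (d * e * f) with hdef | hdef
  · have habs : |d| * |e| * |f| = d * e * f := by rw [← abs_mul, ← abs_mul, abs_of_nonneg hdef]
    nlinarith [mul_nonneg ha hb, mul_nonneg ha hc, mul_nonneg hb hc,
      mul_nonneg (mul_nonneg (abs_nonneg d) (abs_nonneg e)) (abs_nonneg f)]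
  · have hsum := hneg hdef
    have habs : |d| * |e| * |f| = -(d * e * f) := by rw [← abs_mul, ← abs_mul, abs_of_neg hdef]
    have hdef' : (2 * |d|) * (2 * |e|) * (2 * |f|) ≤ a * a * c :=
      mul_le_mul (mul_le_mul hd he (by positivity) ha) (hf.trans hbc) (by positivity)
        (by positivity)
    nlinarith [mul_le_mul_of_nonneg_left hsum (mul_nonneg ha hc),
      mul_le_mul_of_nonneg_left hab (mul_nonneg ha hc),
      mul_le_mul_of_nonneg_left hbc (mul_nonneg ha (abs_nonneg e)),
      mul_le_mul_of_nonneg_left hbc (mul_nonneg ha (abs_nonneg f))]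

theorem two_mul_abs_add_le_of_mul_mul_neg {a b d e f : R}
    (h : ∀ x y : R, 0 ≤ a * x ^ 2 + b * y ^ 2 + 2 * (d * x * y + e * x + f * y))
    (hdef : d * e * f < 0) : 2 * (|d| + |e| + |f|) ≤ a + b := by
  have habs : |d| * |e| * |f| = -(d * e * f) := by rw [← abs_mul, ← abs_mul, abs_of_neg hdef]
  have := h 1 1; have := h 1 (-1); have := h (-1) 1; have := h (-1) (-1)
  rcases le_total 0 d with hd | hd <;> rcases le_total 0 e with he | he <;>
    rcases le_total 0 f with hf | hf <;>
    simp only [abs_of_nonneg, abs_of_nonpos, hd, he, hf] at habs ⊢ <;>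
    linarith

end Inequalities

theorem eq_of_reduced_of_det_eq_one {a b c d e f : ℤ} (hab : a ≤ b) (hbc : b ≤ c)
    (h₁ : ∀ x : ℤ, 0 ≤ a * x ^ 2 + 2 * d * x)
    (h₂ : ∀ x y : ℤ, 0 ≤ a * x ^ 2 + b * y ^ 2 + 2 * (d * x * y + e * x + f * y))
    (hdet : a * b * c + 2 * d * e * f - a * f ^ 2 - b * e ^ 2 - c * d ^ 2 = 1) :
    a = 1 ∧ b = 1 ∧ c = 1 ∧ d = 0 ∧ e = 0 ∧ f = 0 := by
  have hd : 2 * |d| ≤ a := by cases abs_cases d <;> linarith [h₁ 1, h₁ (-1)]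
  have he : 2 * |e| ≤ a := by cases abs_cases e <;> linarith [h₂ 1 0, h₂ (-1) 0]
  have hf : 2 * |f| ≤ b := by cases abs_cases f <;> linarith [h₂ 0 1, h₂ 0 (-1)]
  have hprod := mul_mul_le_four_mul_det hab hbc hd he hf (two_mul_abs_add_le_of_mul_mul_neg h₂)
  rw [hdet] at hprod
  have ha : 1 ≤ a := by
    by_contra! ha
    obtain rfl : a = 0 := by linarith [abs_nonneg d]
    obtain rfl : d = 0 := abs_eq_zero.1 (by linarith [abs_nonneg d])
    obtain rfl : e = 0 := abs_eq_zero.1 (by linarith [abs_nonneg e])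
    simp at hdet
  obtain rfl : a = 1 := by
    by_contra! ha1
    have ha2 : 2 ≤ a := by omega
    have hab4 : 2 * 2 ≤ a * b := mul_le_mul ha2 (by omega) (by norm_num) (by omega)
    nlinarith
  obtain ⟨rfl, rfl⟩ : d = 0 ∧ e = 0 := by
    constructor <;> cases abs_cases d <;> cases abs_cases e <;> omega
  obtain rfl : b = 1 := by
    have hf2 : (2 * |f|) ^ 2 ≤ b ^ 2 := pow_le_pow_left₀ (by positivity) hf 2
    nlinarith [sq_abs f, mul_le_mul_of_nonneg_left hbc (by omega : (0 : ℤ) ≤ b)]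
  obtain rfl : f = 0 := by cases abs_cases f <;> omega
  omega

section IntegralForms

variable {n : Type*} [Fintype n]

theorem dotProduct_mulVec_transpose_mul_mul {R : Type*} [CommSemiring R] (A P : Matrix n n R)
    (v : n → R) : v ⬝ᵥ (Pᵀ * A * P) *ᵥ v = (P *ᵥ v) ⬝ᵥ A *ᵥ (P *ᵥ v) := by
  rw [← mulVec_mulVec, ← mulVec_mulVec, dotProduct_mulVec, vecMul_transpose]

/-- Replacing the `j`-th column of the identity matrix by `v` gives a matrix of determinant `v j`;
a form is reduced if no such substitution with `v j = 1` decreases its `j`-th diagonal entry. -/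
def IsReducedForm (A : Matrix n n ℤ) : Prop :=
  ∀ j (v : n → ℤ), v j = 1 → A j j ≤ v ⬝ᵥ A *ᵥ v

theorem IsReducedForm.submatrix {A : Matrix n n ℤ} (hA : IsReducedForm A) (σ : Equiv.Perm n) :
    IsReducedForm (A.submatrix σ σ) := by
  intro j v hv
  have := hA (σ j) (v ∘ σ.symm) (by simpa using hv)
  rwa [submatrix_mulVec_equiv, ← comp_equiv_symm_dotProduct]

variable [DecidableEq n]

theorem single_one_dotProduct_mulVec_single_one {R : Type*} [CommSemiring R] (A : Matrix n n R)
    (i : n) : Pi.single i 1 ⬝ᵥ A *ᵥ Pi.single i 1 = A i i := by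
  rw [mulVec_single_one, single_one_dotProduct, col_apply]

theorem transpose_mul_mul_apply_self {R : Type*} [CommSemiring R] (A P : Matrix n n R) (i : n) :
    (Pᵀ * A * P) i i = P.col i ⬝ᵥ A *ᵥ P.col i := by
  rw [← single_one_dotProduct_mulVec_single_one (Pᵀ * A * P),
    dotProduct_mulVec_transpose_mul_mul, mulVec_single_one]

theorem isReducedForm_of_trace_le {A : Matrix n n ℤ}
    (h : ∀ P : Matrix n n ℤ, P.det = 1 → A.trace ≤ (Pᵀ * A * P).trace) : IsReducedForm A := by
  intro j v hv
  set P := (1 : Matrix n n ℤ).updateCol j v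
  have hdet : P.det = 1 := by rw [← cramer_apply, cramer_one]; exact hv
  have hdiag : ∀ i, (Pᵀ * A * P) i i = Function.update A.diag j (v ⬝ᵥ A *ᵥ v) i := by
    intro i
    rw [transpose_mul_mul_apply_self]
    by_cases hi : i = j
    · subst hi
      have : P.col i = v := funext fun k => updateCol_self
      simp [this]
    · have : P.col i = Pi.single i 1 := by
        ext k
        simp [P, col_apply, updateCol_ne hi, one_apply, Pi.single_apply]
      simp [this, hi]
  have htr : (Pᵀ * A * P).trace + A j j = A.trace + v ⬝ᵥ A *ᵥ v := by
    simp only [trace, diag_apply, hdiag, Finset.sum_update_of_mem (Finset.mem_univ j),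
      Finset.sdiff_singleton_eq_erase, Finset.sum_erase_eq_sub (Finset.mem_univ j)]
    ring
  linarith [h P hdet]

theorem trace_transpose_mul_mul_nonneg {A : Matrix n n ℤ} (hA : ∀ v, 0 ≤ v ⬝ᵥ A *ᵥ v)
    (P : Matrix n n ℤ) : 0 ≤ (Pᵀ * A * P).trace :=
  Finset.sum_nonneg fun i _ => (hA _).trans_eq (transpose_mul_mul_apply_self A P i).symm

theorem exists_isReducedForm_transpose_mul_mul {A : Matrix n n ℤ}
    (hA : ∀ v, 0 ≤ v ⬝ᵥ A *ᵥ v) : ∃ P : Matrix n n ℤ, P.det = 1 ∧ IsReducedForm (Pᵀ * A * P) := by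
  obtain ⟨_, ⟨P, hP, rfl⟩, hmin⟩ := Int.exists_least_of_bdd
    (P := fun t => ∃ P : Matrix n n ℤ, P.det = 1 ∧ (Pᵀ * A * P).trace = t)
    ⟨0, fun _ ⟨P, _, ht⟩ => ht ▸ trace_transpose_mul_mul_nonneg hA P⟩ ⟨_, 1, det_one, rfl⟩
  refine ⟨P, hP, isReducedForm_of_trace_le fun R hR => ?_⟩
  have := hmin _ ⟨P * R, by rw [det_mul, hP, hR, one_mul], rfl⟩
  simpa only [transpose_mul, Matrix.mul_assoc] using this

end IntegralForms

theorem IsReducedForm.eq_one_of_monotone {A : Matrix (Fin 3) (Fin 3) ℤ} (hred : IsReducedForm A)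
    (hA : A.IsSymm) (hmono : Monotone fun i => A i i) (hdet : A.det = 1) : A = 1 := by
  have h10 : A 1 0 = A 0 1 := hA.apply 0 1
  have h20 : A 2 0 = A 0 2 := hA.apply 0 2
  have h21 : A 2 1 = A 1 2 := hA.apply 1 2
  obtain ⟨ha, hb, hc, hd, he, hf⟩ := eq_of_reduced_of_det_eq_one (d := A 0 1) (e := A 0 2)
    (f := A 1 2) (hmono (by decide : (0 : Fin 3) ≤ 1)) (hmono (by decide : (1 : Fin 3) ≤ 2))
    (fun x => by
      have := hred 1 ![x, 1, 0] rfl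
      simp only [Fin.isValue, dotProduct, mulVec, Fin.sum_univ_three, cons_val_zero, cons_val_one,
        cons_val, mul_one, mul_zero, add_zero, h10, one_mul, zero_mul] at this
      linarith)
    (fun x y => by
      have := hred 2 ![x, y, 1] rfl
      simp only [Fin.isValue, dotProduct, mulVec, Fin.sum_univ_three, cons_val_zero, cons_val_one,
        cons_val, mul_one, h10, h20, h21, one_mul] at this
      linarith)
    (by rw [det_fin_three, h10, h20, h21] at hdet; linarith)
  ext i j
  fin_cases i <;> fin_cases j <;> simp [ha, hb, hc, hd, he, hf, h10, h20, h21]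

theorem IsReducedForm.eq_one {A : Matrix (Fin 3) (Fin 3) ℤ} (hred : IsReducedForm A)
    (hA : A.IsSymm) (hdet : A.det = 1) : A = 1 := by
  let σ := Tuple.sort fun i => A i i
  have h : A.submatrix σ σ = 1 := (hred.submatrix σ).eq_one_of_monotone (hA.submatrix σ)
    (Tuple.monotone_sort fun i => A i i) (by rw [det_submatrix_equiv_self, hdet])
  simpa using congr_arg (fun B : Matrix (Fin 3) (Fin 3) ℤ => B.submatrix σ.symm σ.symm) h

theorem exists_dotProduct_self_eq {A : Matrix (Fin 3) (Fin 3) ℤ} (hA : A.IsSymm)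
    (hpos : ∀ v, 0 ≤ v ⬝ᵥ A *ᵥ v) (hdet : A.det = 1) (v : Fin 3 → ℤ) :
    ∃ w : Fin 3 → ℤ, w ⬝ᵥ w = v ⬝ᵥ A *ᵥ v := by
  obtain ⟨P, hP, hred⟩ := exists_isReducedForm_transpose_mul_mul hpos
  have hPA : Pᵀ * A * P = 1 := hred.eq_one
    (by simp only [IsSymm, transpose_mul, transpose_transpose, hA.eq, Matrix.mul_assoc])
    (by rw [det_mul, det_mul, det_transpose, hP, hdet]; norm_num)
  have hw : P *ᵥ (P.adjugate *ᵥ v) = v := by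
    rw [mulVec_mulVec, mul_adjugate, hP, one_smul, one_mulVec]
  refine ⟨P.adjugate *ᵥ v, ?_⟩
  calc P.adjugate *ᵥ v ⬝ᵥ P.adjugate *ᵥ v
      = P.adjugate *ᵥ v ⬝ᵥ (Pᵀ * A * P) *ᵥ (P.adjugate *ᵥ v) := by rw [hPA, one_mulVec]
    _ = v ⬝ᵥ A *ᵥ v := by rw [dotProduct_mulVec_transpose_mul_mul, hw]

theorem exists_sum_three_sq_of_dvd {N r D s : ℤ} (hN : 1 < N) (hr : 0 < r) (hND : N * D = r + 1)
    (hs : r ∣ s ^ 2 + D) : ∃ x y z : ℤ, x ^ 2 + y ^ 2 + z ^ 2 = N := by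
  obtain ⟨k, hk⟩ := hs
  have hD : 0 < D := by nlinarith
  have hk0 : 0 < k := by nlinarith
  set A : Matrix (Fin 3) (Fin 3) ℤ := !![N, 1, 0; 1, k, -s; 0, -s, r]
  have hA : A.IsSymm := by
    ext i j; fin_cases i <;> fin_cases j <;> rfl
  have hdet : A.det = 1 := by
    simp only [A, det_fin_three, Fin.isValue, of_apply, cons_val', cons_val_zero, cons_val_fin_one,
      cons_val_one, cons_val, mul_neg, neg_mul, neg_neg, mul_one, one_mul, mul_zero, add_zero,
      zero_mul, neg_zero, sub_zero]
    linear_combination hND - N * hk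
  have hpos : ∀ v, 0 ≤ v ⬝ᵥ A *ᵥ v := by
    intro v
    have key : (N * k - 1) * N * (v ⬝ᵥ A *ᵥ v) = (N * k - 1) * (N * v 0 + v 1) ^ 2 +
        ((N * k - 1) * v 1 - N * s * v 2) ^ 2 + N * v 2 ^ 2 := by
      simp only [A, dotProduct, mulVec, of_apply, cons_val', cons_val_fin_one, Fin.sum_univ_three,
        Fin.isValue, cons_val_zero, cons_val_one, cons_val, one_mul, zero_mul, add_zero, neg_mul,
        zero_add]
      linear_combination (N * v 2 ^ 2) * (hND - N * hk)
    have hNk : 0 < N * k - 1 := by nlinarith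
    refine nonneg_of_mul_nonneg_right ?_ (mul_pos hNk (by omega : (0 : ℤ) < N))
    rw [key]
    have := hNk.le
    positivity
  obtain ⟨w, hw⟩ := exists_dotProduct_self_eq hA hpos hdet ![1, 0, 0]
  refine ⟨w 0, w 1, w 2, ?_⟩
  simpa [dotProduct, mulVec, Fin.sum_univ_three, A, sq] using hw

theorem exists_prime_mod_four_eq_one_dvd_mul_add_one {N m a : ℕ} (ha : a.Coprime (4 * N))
    (ha4 : a % 4 = 1) (hma : N ∣ m * a + 1) : ∃ p, p.Prime ∧ p % 4 = 1 ∧ N ∣ m * p + 1 := by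
  have : NeZero (4 * N) := ⟨by rintro h; simp_all⟩
  obtain ⟨p, -, hp, hpa⟩ :=
    Nat.forall_exists_prime_gt_and_eq_mod ((ZMod.isUnit_iff_coprime a (4 * N)).2 ha) 0
  have hmod : p ≡ a [MOD 4 * N] := (ZMod.natCast_eq_natCast_iff _ _ _).1 hpa
  refine ⟨p, hp, ?_, ?_⟩
  · rw [← ha4]; exact hmod.of_mul_right N
  · exact ((hmod.of_mul_left 4).mul_left m |>.add_right 1).dvd_iff dvd_rfl |>.2 hma

theorem legendreSym_neg_eq_one {N m p : ℕ} [Fact p.Prime] {D : ℤ} (hN : Odd N)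
    (hp : p % 4 = 1) (hD : (N : ℤ) * D = m * p + 1) (hJ : J(m | N) = J(-1 | N)) :
    legendreSym p (-D) = 1 := by
  have hND : J(N | p) * J(D | p) = 1 := by
    rw [← jacobiSym.mul_left, hD, jacobiSym.mod_left' (b := p) (a₂ := 1) (by simp),
      jacobiSym.one_left]
  have hmp : J(m | N) * J(p | N) = J(-1 | N) := by
    rw [← jacobiSym.mul_left]
    exact jacobiSym.mod_left' (Int.modEq_iff_dvd.2 ⟨-D, by linear_combination hD⟩)
  have hpN : J(p | N) = 1 := by
    rw [← hJ] at hmp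
    refine (mul_eq_left₀ ?_).1 hmp
    rw [hJ]
    exact jacobiSym.ne_zero (by simp)
  rw [jacobiSym.legendreSym.to_jacobiSym, neg_eq_neg_one_mul, jacobiSym.mul_left,
    jacobiSym.at_neg_one (Nat.odd_iff.2 (by omega)), ZMod.χ₄_nat_one_mod_four hp, one_mul,
    ← Int.eq_of_mul_eq_one hND, jacobiSym.quadratic_reciprocity_one_mod_four' hN hp, hpN]

theorem exists_sq_add_dvd {p : ℕ} [Fact p.Prime] (hp : Odd p) {D : ℤ}
    (h : legendreSym p (-D) = 1) : ∃ s : ℤ, 2 * (p : ℤ) ∣ s ^ 2 + D := by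
  have hD : ((-D : ℤ) : ZMod p) ≠ 0 := fun h0 => by
    rw [(legendreSym.eq_zero_iff p (-D)).2 h0] at h; exact zero_ne_one h
  obtain ⟨σ, hσ⟩ := (legendreSym.eq_one_iff p hD).1 h
  obtain ⟨q, hq⟩ := hp
  set s₀ : ℤ := (σ.val : ℤ)
  have hs₀ : (s₀ : ZMod p) = σ := by simp [s₀]
  -- `s ≡ s₀ (mod p)` and `s ≡ D (mod 2)`
  refine ⟨s₀ + p * (s₀ + D), IsCoprime.mul_dvd ⟨-q, 1, by rw [hq]; push_cast; ring⟩ ?_ ?_⟩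
  · obtain ⟨t, ht⟩ := Int.even_mul_succ_self D
    exact ⟨2 * (s₀ + q * (s₀ + D)) ^ 2 + 2 * (s₀ + q * (s₀ + D)) * D + t, by
      rw [hq]; push_cast; linear_combination ht⟩
  · rw [← ZMod.intCast_zmod_eq_zero_iff_dvd]
    push_cast
    rw [ZMod.natCast_self, hs₀]
    push_cast at hσ
    linear_combination -hσ

theorem exists_sum_three_sq_of_jacobiSym_eq {N m a : ℕ} (hN : 1 < N) (hodd : Odd N) (hm : m ∣ 2)
    (ha : a.Coprime (4 * N)) (ha4 : a % 4 = 1) (hma : N ∣ m * a + 1)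
    (hJ : J(m | N) = J(-1 | N)) : ∃ x y z : ℤ, x ^ 2 + y ^ 2 + z ^ 2 = N := by
  obtain ⟨p, hp, hp4, D, hD⟩ := exists_prime_mod_four_eq_one_dvd_mul_add_one ha ha4 hma
  have : Fact p.Prime := ⟨hp⟩
  have hD' : (N : ℤ) * D = m * p + 1 := by exact_mod_cast hD.symm
  obtain ⟨s, hs⟩ := exists_sq_add_dvd (Nat.odd_iff.2 (by omega))
    (legendreSym_neg_eq_one hodd hp4 hD' hJ)
  have hm0 : 0 < m := Nat.pos_of_dvd_of_pos hm two_pos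
  exact exists_sum_three_sq_of_dvd (r := m * p) (by exact_mod_cast hN)
    (by have := hp.pos; positivity) hD' ((mul_dvd_mul_right (by exact_mod_cast hm) _).trans hs)

theorem exists_sum_three_sq {N : ℕ} (hodd : Odd N) (h8 : N % 8 ≠ 7) :
    ∃ x y z : ℤ, x ^ 2 + y ^ 2 + z ^ 2 = N := by
  rcases (by rw [Nat.odd_iff] at hodd; omega : N % 4 = 1 ∨ N % 8 = 3) with h4 | h3
  · obtain ⟨t, rfl⟩ : ∃ t, N = 4 * t + 1 := ⟨N / 4, by omega⟩
    rcases Nat.eq_zero_or_pos t with rfl | ht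
    · exact ⟨1, 0, 0, by norm_num⟩
    refine exists_sum_three_sq_of_jacobiSym_eq (m := 1) (a := 8 * t + 1) (by omega) hodd
      (one_dvd 2) (Nat.isCoprime_iff_coprime.1 ⟨-(8 * t + 3), 4 * t + 1, by push_cast; ring⟩)
      (by omega) ⟨2, by ring⟩ ?_
    rw [Nat.cast_one, jacobiSym.one_left, jacobiSym.at_neg_one hodd,
      ZMod.χ₄_nat_one_mod_four h4]
  · obtain ⟨t, rfl⟩ : ∃ t, N = 8 * t + 3 := ⟨N / 8, by omega⟩
    refine exists_sum_three_sq_of_jacobiSym_eq (m := 2) (a := 4 * t + 1) (by omega) hodd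
      dvd_rfl (Nat.isCoprime_iff_coprime.1 ⟨8 * t + 1, -t, by push_cast; ring⟩)
      (by omega) ⟨1, by ring⟩ ?_
    rw [Nat.cast_ofNat, jacobiSym.at_two hodd, jacobiSym.at_neg_one hodd, ZMod.χ₈_nat_mod_eight,
      ZMod.χ₄_nat_mod_four, show (8 * t + 3) % 8 = 3 by omega, show (8 * t + 3) % 4 = 3 by omega]
    rfl

theorem exists_sum_three_sq_eq_two_mul_add_odd_sq_of_odd {a b c : ℤ} (hc : Odd c)
    (h : Odd (a ^ 2 + b ^ 2 + c ^ 2)) :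
    ∃ x y z : ℤ, a ^ 2 + b ^ 2 + c ^ 2 = 2 * (x ^ 2 + y ^ 2) + (2 * z + 1) ^ 2 := by
  obtain ⟨z, rfl⟩ := hc
  have hab : Even (a + b) := by simpa [← Int.not_even_iff_odd, parity_simps] using h
  obtain ⟨x, hx⟩ := hab
  exact ⟨x, x - b, z, by linear_combination (a + 2 * x - b) * hx⟩

theorem exists_sum_three_sq_eq_two_mul_add_odd_sq {a b c : ℤ} (h : Odd (a ^ 2 + b ^ 2 + c ^ 2)) :
    ∃ x y z : ℤ, a ^ 2 + b ^ 2 + c ^ 2 = 2 * (x ^ 2 + y ^ 2) + (2 * z + 1) ^ 2 := by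
  by_cases hc : Odd c
  · exact exists_sum_three_sq_eq_two_mul_add_odd_sq_of_odd hc h
  by_cases hb : Odd b
  · obtain ⟨x, y, z, hxyz⟩ := exists_sum_three_sq_eq_two_mul_add_odd_sq_of_odd (a := a) (b := c)
      hb (by rwa [add_right_comm])
    exact ⟨x, y, z, by linear_combination hxyz⟩
  have ha : Odd a := by simp_all [← Int.not_even_iff_odd, parity_simps]
  obtain ⟨x, y, z, hxyz⟩ := exists_sum_three_sq_eq_two_mul_add_odd_sq_of_odd (a := b) (b := c) ha
    (by rwa [add_comm, ← add_assoc])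
  exact ⟨x, y, z, by linear_combination hxyz⟩

theorem exists_sum_three_sq_eq_four_mul_add_sq {a b c : ℤ}
    (h : (a ^ 2 + b ^ 2 + c ^ 2) % 4 = 1) :
    ∃ x y w : ℤ, a ^ 2 + b ^ 2 + c ^ 2 = 4 * (x ^ 2 + y ^ 2) + (4 * w + 1) ^ 2 := by
  obtain ⟨x, y, z, hxyz⟩ := exists_sum_three_sq_eq_two_mul_add_odd_sq (a := a) (b := b) (c := c)
    (Int.odd_iff.2 (by omega))
  have hxy : Even (x + y) := by
    have : Even (x ^ 2 + y ^ 2) := by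
      rw [hxyz] at h
      rw [Int.even_iff]
      ring_nf at h
      omega
    simpa [parity_simps] using this
  obtain ⟨X, hX⟩ := hxy
  obtain ⟨w, rfl | rfl⟩ := Int.even_or_odd' z
  · exact ⟨X, X - y, w, by linear_combination hxyz + 2 * (x + 2 * X - y) * hX⟩
  · exact ⟨X, X - y, -w - 1, by linear_combination hxyz + 2 * (x + 2 * X - y) * hX⟩

theorem stmt_7 (n : ℕ) (hn : 0 < n) :
    ∃ x y z w : ℤ, Int.gcd x (Int.gcd y (Int.gcd z w)) = 1 ∧
      x ^ 2 + y ^ 2 + 2 * z ^ 2 + 4 * w ^ 2 + 2 * z * w = (n : ℤ) := by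
  rcases (by omega : n = 1 ∨ n = 2 ∨ n % 4 = 3 ∨ (4 ≤ n ∧ n % 4 ≠ 3)) with
    rfl | rfl | h3 | ⟨h4, h3⟩
  · exact ⟨1, 0, 0, 0, by simp, by norm_num⟩
  · exact ⟨0, 0, 1, 0, by simp, by norm_num⟩
  · obtain ⟨a, b, c, habc⟩ := exists_sum_three_sq (N := 4 * n - 7) (Nat.odd_iff.2 (by omega))
      (by omega)
    rw [Nat.cast_sub (by omega)] at habc
    push_cast at habc
    obtain ⟨x, y, w, hxyw⟩ := exists_sum_three_sq_eq_four_mul_add_sq (by rw [habc]; omega)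
    exact ⟨x, y, 1, w, by simp, by linarith⟩
  · obtain ⟨a, b, c, habc⟩ := exists_sum_three_sq (N := 2 * n - 7) (Nat.odd_iff.2 (by omega))
      (by omega)
    rw [Nat.cast_sub (by omega)] at habc
    push_cast at habc
    obtain ⟨x, y, z, hxyz⟩ := exists_sum_three_sq_eq_two_mul_add_odd_sq
      (by rw [habc, Int.odd_iff]; omega)
    exact ⟨x, y, z, 1, by simp, by linarith⟩
end

section
/- The quaternary quadratic form x² + 2y² + 3z² + 4w² + 2zw + 2yw is primitively universal: every positive integer n admits integers x, y, z, w with gcd(x,y,z,w) = 1 representing n. -/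
set_option maxHeartbeats 1600000


lemma round_near (t v : ℤ) (ht : 0 < t) : ∃ q r : ℤ, v = t * q + r ∧ 4 * r ^ 2 ≤ t ^ 2 := by
  refine ⟨(2 * v + t) / (2 * t), v - t * ((2 * v + t) / (2 * t)), by ring, ?_⟩
  have h2t : (0 : ℤ) < 2 * t := by linarith
  have hmod := Int.emod_nonneg (2 * v + t) (by positivity : (2 * t : ℤ) ≠ 0)
  have hmod2 := Int.emod_lt_of_pos (2 * v + t) h2t
  have hdiv := Int.mul_ediv_add_emod (2 * v + t) (2 * t)
  nlinarith [hdiv, hmod, hmod2]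

/-- Davenport–Cassels descent for x²+y²+z². -/
lemma dc3 (N : ℤ) : ∀ T : ℕ, 0 < T → ∀ v₁ v₂ v₃ : ℤ,
    v₁ ^ 2 + v₂ ^ 2 + v₃ ^ 2 = N * (T : ℤ) ^ 2 → ∃ a b c : ℤ, a ^ 2 + b ^ 2 + c ^ 2 = N := by
  intro T
  induction T using Nat.strong_induction_on with
  | _ T ih =>
    intro hT v₁ v₂ v₃ hv
    have ht0 : (0 : ℤ) < (T : ℤ) := by exact_mod_cast hT
    obtain ⟨q₁, r₁, he₁, hsq₁⟩ := round_near (T : ℤ) v₁ ht0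
    obtain ⟨q₂, r₂, he₂, hsq₂⟩ := round_near (T : ℤ) v₂ ht0
    obtain ⟨q₃, r₃, he₃, hsq₃⟩ := round_near (T : ℤ) v₃ ht0
    have hrle : r₁ ^ 2 + r₂ ^ 2 + r₃ ^ 2 < (T : ℤ) ^ 2 := by nlinarith
    rcases eq_or_lt_of_le (by positivity : (0:ℤ) ≤ r₁ ^ 2 + r₂ ^ 2 + r₃ ^ 2) with hz | hz
    · have h₁ : r₁ = 0 := by nlinarith [sq_nonneg r₁, sq_nonneg r₂, sq_nonneg r₃]
      have h₂ : r₂ = 0 := by nlinarith [sq_nonneg r₁, sq_nonneg r₂, sq_nonneg r₃]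
      have h₃ : r₃ = 0 := by nlinarith [sq_nonneg r₁, sq_nonneg r₂, sq_nonneg r₃]
      refine ⟨q₁, q₂, q₃, ?_⟩
      have h2 : (T:ℤ) ^ 2 * (q₁ ^ 2 + q₂ ^ 2 + q₃ ^ 2) = (T:ℤ) ^ 2 * N := by
        subst he₁ he₂ he₃; rw [h₁, h₂, h₃] at hv; linear_combination hv
      exact (mul_left_cancel₀ (by positivity) h2)
    · obtain ⟨S, hTS, hSeq⟩ : ∃ S : ℤ, (T : ℤ) * S = r₁ ^ 2 + r₂ ^ 2 + r₃ ^ 2 ∧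
          S = (q₁ ^ 2 + q₂ ^ 2 + q₃ ^ 2 - N) * T
              + 2 * (N * T - (v₁ * q₁ + v₂ * q₂ + v₃ * q₃)) := by
        refine ⟨_, ?_, rfl⟩
        subst he₁ he₂ he₃; linear_combination -hv
      have hS0 : 0 < S := by
        rcases le_or_gt S 0 with h | h
        · nlinarith
        · exact h
      have hSt : S < (T : ℤ) := by nlinarith
      have hnew : ((q₁ ^ 2 + q₂ ^ 2 + q₃ ^ 2 - N) * v₁ + 2 * (N * T - (v₁ * q₁ + v₂ * q₂ + v₃ * q₃)) * q₁) ^ 2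
          + ((q₁ ^ 2 + q₂ ^ 2 + q₃ ^ 2 - N) * v₂ + 2 * (N * T - (v₁ * q₁ + v₂ * q₂ + v₃ * q₃)) * q₂) ^ 2
          + ((q₁ ^ 2 + q₂ ^ 2 + q₃ ^ 2 - N) * v₃ + 2 * (N * T - (v₁ * q₁ + v₂ * q₂ + v₃ * q₃)) * q₃) ^ 2
          = N * S ^ 2 := by
        rw [hSeq]; linear_combination (q₁^2 + q₂^2 + q₃^2 - N)^2 * hv
      have hSnat : S.toNat < T := by omega
      have hSpos : 0 < S.toNat := by omega
      have hcast : (S.toNat : ℤ) = S := Int.toNat_of_nonneg hS0.le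
      exact ih S.toNat hSnat hSpos _ _ _ (by rw [hcast]; exact hnew)


lemma np_not_square {N p : ℕ} (hp : p.Prime) (hpN : ¬ p ∣ N) (k : ℕ) : k ^ 2 ≠ N * p := by
  intro h
  have hdvd : p ∣ k := hp.dvd_of_dvd_pow ⟨N, by rw [h]; ring⟩
  obtain ⟨m, rfl⟩ := hdvd
  have hp0 : 0 < p := hp.pos
  have hNeq : N = p * m ^ 2 := by
    have h' : p * (p * m ^ 2) = p * N := by rw [Nat.mul_comm p N, ← h]; ring
    exact (Nat.eq_of_mul_eq_mul_left hp0 h').symm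
  exact hpN ⟨m ^ 2, hNeq⟩

lemma int_sq_ne {N p : ℕ} (hp : p.Prime) (hpN : ¬ p ∣ N) (s : ℤ) : s ^ 2 ≠ (N : ℤ) * p := by
  intro h
  apply np_not_square hp hpN s.natAbs
  have h3 := congrArg Int.natAbs h
  rw [Int.natAbs_pow, show (N:ℤ) * (p:ℤ) = ((N*p : ℕ) : ℤ) by push_cast; ring] at h3
  simpa [Int.natAbs_mul] using h3

lemma thue_lattice (N p : ℕ) (hN : 2 ≤ N) (hp : p.Prime) (hpN : ¬ p ∣ N) (ρ : ℤ) :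
    ∃ s t u : ℤ, ¬(s = 0 ∧ t = 0 ∧ u = 0) ∧
      ((N : ℤ)) ∣ (s - t) ∧ ((p : ℤ)) ∣ (s - ρ * u) ∧
      s ^ 2 < (N : ℤ) * p ∧ t ^ 2 ≤ (N : ℤ) ∧ u ^ 2 < (p : ℤ) := by
  haveI : NeZero N := ⟨by omega⟩
  haveI : Fact p.Prime := ⟨hp⟩
  obtain ⟨A, hA⟩ : ∃ A, A = Nat.sqrt (N * p) := ⟨_, rfl⟩
  obtain ⟨B, hB⟩ : ∃ B, B = Nat.sqrt N := ⟨_, rfl⟩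
  obtain ⟨C, hC⟩ : ∃ C, C = Nat.sqrt p := ⟨_, rfl⟩
  have h1 : N * p < (A + 1) ^ 2 := by rw [hA]; exact Nat.lt_succ_sqrt' (N * p)
  have h2 : N < (B + 1) ^ 2 := by rw [hB]; exact Nat.lt_succ_sqrt' N
  have h3 : p < (C + 1) ^ 2 := by rw [hC]; exact Nat.lt_succ_sqrt' p
  have hA2 : ((A : ℤ)) ^ 2 ≤ (N : ℤ) * p := by
    have h := Nat.sqrt_le' (N * p)
    rw [← hA] at h
    calc ((A : ℤ)) ^ 2 = ((A ^ 2 : ℕ) : ℤ) := by push_cast; ring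
    _ ≤ ((N * p : ℕ) : ℤ) := by exact_mod_cast h
    _ = (N : ℤ) * p := by push_cast; ring
  have hB2 : ((B : ℤ)) ^ 2 ≤ (N : ℤ) := by
    have h := Nat.sqrt_le' N
    rw [← hB] at h
    calc ((B : ℤ)) ^ 2 = ((B ^ 2 : ℕ) : ℤ) := by push_cast; ring
    _ ≤ (N : ℤ) := by exact_mod_cast h
  have hC2 : ((C : ℤ)) ^ 2 ≤ (p : ℤ) := by
    have h := Nat.sqrt_le' p
    rw [← hC] at h
    calc ((C : ℤ)) ^ 2 = ((C ^ 2 : ℕ) : ℤ) := by push_cast; ring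
    _ ≤ (p : ℤ) := by exact_mod_cast h
  obtain ⟨S, hS⟩ : ∃ S : Finset (ℤ × ℤ × ℤ),
      S = Finset.Icc (0:ℤ) A ×ˢ (Finset.Icc (0:ℤ) B ×ˢ Finset.Icc (0:ℤ) C) := ⟨_, rfl⟩
  have hcardS : S.card = (A + 1) * ((B + 1) * (C + 1)) := by
    rw [hS, Finset.card_product, Finset.card_product]
    simp [Int.card_Icc]
  have hcount : Fintype.card (ZMod N × ZMod p) < S.card := by
    rw [hcardS, Fintype.card_prod, ZMod.card, ZMod.card]
    by_contra hcon
    push_neg at hcon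
    have e1 : (N * p) * N < (A + 1) ^ 2 * (B + 1) ^ 2 :=
      mul_lt_mul'' h1 h2 (Nat.zero_le _) (Nat.zero_le _)
    have e2 : ((N * p) * N) * p < ((A + 1) ^ 2 * (B + 1) ^ 2) * (C + 1) ^ 2 :=
      mul_lt_mul'' e1 h3 (Nat.zero_le _) (Nat.zero_le _)
    have e3 := Nat.pow_le_pow_left hcon 2
    nlinarith [e2, e3]
  have hmaps : ∀ v ∈ S, (fun v : ℤ × ℤ × ℤ =>
      (((v.1 - v.2.1 : ℤ) : ZMod N), ((v.1 - ρ * v.2.2 : ℤ) : ZMod p))) v ∈ Finset.univ :=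
    fun _ _ => Finset.mem_univ _
  obtain ⟨x, hx, y, hy, hxy, hfeq⟩ :=
    Finset.exists_ne_map_eq_of_card_lt_of_maps_to (by simpa using hcount) hmaps
  rw [hS] at hx hy
  simp only [Finset.mem_product, Finset.mem_Icc] at hx hy
  obtain ⟨⟨hx11, hx12⟩, ⟨hx21, hx22⟩, hx31, hx32⟩ := hx
  obtain ⟨⟨hy11, hy12⟩, ⟨hy21, hy22⟩, hy31, hy32⟩ := hy
  refine ⟨x.1 - y.1, x.2.1 - y.2.1, x.2.2 - y.2.2, ?_, ?_, ?_, ?_, ?_, ?_⟩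
  · rintro ⟨h1', h2', h3'⟩
    apply hxy
    exact Prod.ext (by linarith) (Prod.ext (by linarith) (by linarith))
  · have hcg := congrArg Prod.fst hfeq
    simp only at hcg
    have h0 : (((x.1 - y.1) - (x.2.1 - y.2.1) : ℤ) : ZMod N) = 0 := by
      push_cast
      push_cast at hcg
      linear_combination hcg
    rwa [ZMod.intCast_zmod_eq_zero_iff_dvd] at h0
  · have hcg := congrArg Prod.snd hfeq
    simp only at hcg
    have h0 : (((x.1 - y.1) - ρ * (x.2.2 - y.2.2) : ℤ) : ZMod p) = 0 := by
      push_cast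
      push_cast at hcg
      linear_combination hcg
    rwa [ZMod.intCast_zmod_eq_zero_iff_dvd] at h0
  · have hle : (x.1 - y.1) ^ 2 ≤ ((A : ℤ)) ^ 2 := by nlinarith
    exact lt_of_le_of_ne (hle.trans hA2) (int_sq_ne hp hpN _)
  · have hle : (x.2.1 - y.2.1) ^ 2 ≤ ((B : ℤ)) ^ 2 := by nlinarith
    linarith
  · have hle : (x.2.2 - y.2.2) ^ 2 ≤ ((C : ℤ)) ^ 2 := by nlinarith
    have hne : (x.2.2 - y.2.2) ^ 2 ≠ (p : ℤ) := by
      have := int_sq_ne (N := 1) hp (by simpa using hp.one_lt.ne') (x.2.2 - y.2.2)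
      simpa using this
    exact lt_of_le_of_ne (hle.trans hC2) hne

open scoped NumberTheorySymbols in
lemma exists_good_prime_s9 (N : ℕ) (hN : 2 ≤ N)
    (h8 : N % 8 = 1 ∨ N % 8 = 2 ∨ N % 8 = 5 ∨ N % 8 = 6) :
    ∃ p : ℕ, p.Prime ∧ p % 4 = 1 ∧ N < p ∧ (N : ℤ) ∣ (p : ℤ) + 1 ∧ IsSquare (N : ZMod p) := by
  obtain ⟨Np, hNp, hNpodd⟩ : ∃ Np, (N = Np ∨ N = 2 * Np) ∧ Np % 2 = 1 := by
    rcases h8 with h | h | h | h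
    · exact ⟨N, Or.inl rfl, by omega⟩
    · exact ⟨N / 2, Or.inr (by omega), by omega⟩
    · exact ⟨N, Or.inl rfl, by omega⟩
    · exact ⟨N / 2, Or.inr (by omega), by omega⟩
  obtain ⟨r8, hr8⟩ : ∃ r8, (r8 = 1 ∧ N % 8 ≠ 6) ∨ (r8 = 5 ∧ N % 8 = 6) := by
    rcases eq_or_ne (N % 8) 6 with h | h
    · exact ⟨5, Or.inr ⟨rfl, h⟩⟩
    · exact ⟨1, Or.inl ⟨rfl, h⟩⟩
  have hr8odd : r8 % 2 = 1 := by rcases hr8 with ⟨h, _⟩ | ⟨h, _⟩ <;> omega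
  have hNppos : 0 < Np := by omega
  have hNodd : Odd Np := Nat.odd_iff.mpr hNpodd
  have hco8 : Nat.Coprime 8 Np := by
    have h2 : Nat.Coprime 2 Np := Nat.coprime_two_left.mpr hNodd
    simpa [show (8 : ℕ) = 2 ^ 3 by norm_num] using h2.pow_left 3
  obtain ⟨a, ha8, haNp⟩ := Nat.chineseRemainder hco8 r8 (Np - 1)
  haveI : NeZero (8 * Np) := ⟨by positivity⟩
  have haunit : IsUnit (a : ZMod (8 * Np)) := by
    rw [ZMod.isUnit_iff_coprime]
    apply Nat.Coprime.mul_right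
    · have ha2 : a % 2 = 1 := by
        have h := ha8.of_dvd (by norm_num : (2:ℕ) ∣ 8)
        unfold Nat.ModEq at h
        omega
      have h2 : Nat.Coprime a 2 := Nat.coprime_two_right.mpr (Nat.odd_iff.mpr ha2)
      simpa [show (8 : ℕ) = 2 ^ 3 by norm_num] using h2.pow_right 3
    · have h1 : Nat.Coprime (Np - 1) Np := by
        have hd := Nat.dvd_sub (Nat.gcd_dvd_right (Np - 1) Np) (Nat.gcd_dvd_left (Np - 1) Np)
        rw [show Np - (Np - 1) = 1 by omega] at hd
        exact Nat.dvd_one.mp hd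
      have hg : Nat.gcd a Np = Nat.gcd (Np - 1) Np := Nat.ModEq.gcd_eq haNp
      rw [Nat.Coprime, hg]
      exact h1
  obtain ⟨p, hpgt, hp, hpcast⟩ :=
    Nat.forall_exists_prime_gt_and_eq_mod (q := 8 * Np) haunit (8 * N)
  have hpmod : p ≡ a [MOD 8 * Np] := (ZMod.natCast_eq_natCast_iff _ _ _).mp hpcast
  have hp8 : p % 8 = r8 := by
    have h1 : p ≡ r8 [MOD 8] := (hpmod.of_dvd ⟨Np, rfl⟩).trans ha8
    unfold Nat.ModEq at h1
    rcases hr8 with ⟨h, _⟩ | ⟨h, _⟩ <;> omega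
  have hpNp : p ≡ Np - 1 [MOD Np] := (hpmod.of_dvd ⟨8, by ring⟩).trans haNp
  have hp4 : p % 4 = 1 := by rcases hr8 with ⟨h, _⟩ | ⟨h, _⟩ <;> omega
  have hpodd : Odd p := by rw [Nat.odd_iff]; omega
  have hNlt : N < p := by omega
  have hdvdNp : Np ∣ p + 1 := by
    rcases eq_or_lt_of_le (show 1 ≤ Np by omega) with h1 | h1
    · exact ⟨p + 1, by rw [← h1, one_mul]⟩
    · have hmod : p % Np = Np - 1 := by
        unfold Nat.ModEq at hpNp
        rw [hpNp, Nat.mod_eq_of_lt (by omega)]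
      have hdm := Nat.div_add_mod p Np
      exact ⟨p / Np + 1, by rw [Nat.mul_add, Nat.mul_one]; omega⟩
  have hdvdN : N ∣ p + 1 := by
    rcases hNp with h | h
    · rwa [h]
    · rw [h]
      have h2 : 2 ∣ p + 1 := by omega
      exact Nat.Coprime.mul_dvd_of_dvd_of_dvd (Nat.coprime_two_left.mpr hNodd) h2 hdvdNp
  haveI : Fact p.Prime := ⟨hp⟩
  have hJppNp : J((p : ℤ) | Np) = ZMod.χ₄ Np := by
    have hdvd : ((Np : ℤ)) ∣ (-1 : ℤ) - p := by
      obtain ⟨k, hk⟩ := hdvdNp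
      refine ⟨-k, ?_⟩
      have hcast : ((p : ℤ)) + 1 = (Np : ℤ) * k := by exact_mod_cast hk
      linarith
    have hmod : ((p : ℤ)) % (Np : ℤ) = (-1 : ℤ) % (Np : ℤ) := Int.modEq_iff_dvd.mpr hdvd
    rw [jacobiSym.mod_left' hmod, jacobiSym.at_neg_one hNodd]
  have hrecip : J((Np : ℤ) | p) = J((p : ℤ) | Np) :=
    jacobiSym.quadratic_reciprocity_one_mod_four' hNodd hp4
  have hJN : J((N : ℤ) | p) = 1 := by
    rcases hNp with h | h
    · have hN4 : Np % 4 = 1 := by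
        rcases hr8 with ⟨_, h6⟩ | ⟨_, h6⟩ <;> omega
      rw [h, hrecip, hJppNp, ZMod.χ₄_nat_one_mod_four hN4]
    · have hcast2 : ((N : ℤ)) = 2 * (Np : ℤ) := by rw [h]; push_cast; ring
      rw [hcast2, jacobiSym.mul_left, jacobiSym.at_two hpodd, hrecip, hJppNp]
      have hχ₈ : ZMod.χ₈ p = ZMod.χ₈ ((p % 8 : ℕ) : ZMod 8) := by
        rw [ZMod.χ₈_nat_mod_eight]
      rcases hr8 with ⟨hr, h6⟩ | ⟨hr, h6⟩
      · have hNp4 : Np % 4 = 1 := by rcases h8 with hc | hc | hc | hc <;> omega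
        rw [ZMod.χ₄_nat_one_mod_four hNp4, ZMod.χ₈_nat_mod_eight, hp8, hr]
        decide
      · have hNp4 : Np % 4 = 3 := by omega
        rw [ZMod.χ₄_nat_three_mod_four hNp4, ZMod.χ₈_nat_mod_eight, hp8, hr]
        decide
  refine ⟨p, hp, hp4, hNlt, by exact_mod_cast hdvdN, ?_⟩
  have hsq := ZMod.isSquare_of_jacobiSym_eq_one hJN
  rwa [Int.cast_natCast] at hsq


theorem three_squares_s9 (N : ℕ) (h8 : N % 8 = 1 ∨ N % 8 = 2 ∨ N % 8 = 5 ∨ N % 8 = 6) :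
    ∃ a b c : ℤ, a ^ 2 + b ^ 2 + c ^ 2 = (N : ℤ) := by
  rcases eq_or_ne N 1 with h1 | h1
  · exact ⟨1, 0, 0, by rw [h1]; norm_num⟩
  have hN : 2 ≤ N := by omega
  obtain ⟨p, hp, hp4, hNlt, hdvd, hsq⟩ := exists_good_prime_s9 N hN h8
  haveI : Fact p.Prime := ⟨hp⟩
  have hpN : ¬ p ∣ N := fun h => by have := Nat.le_of_dvd (by omega) h; omega
  obtain ⟨a, b, hab⟩ := Nat.Prime.sq_add_sq (p := p) (by omega)
  have hpa : ((a : ℤ)) ^ 2 + ((b : ℤ)) ^ 2 = (p : ℤ) := by exact_mod_cast hab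
  obtain ⟨r, hr⟩ := hsq
  have hρ : ((p : ℤ)) ∣ ((r.val : ℤ)) ^ 2 - (N : ℤ) := by
    rw [← ZMod.intCast_zmod_eq_zero_iff_dvd]
    push_cast
    have hval : ((r.val : ℕ) : ZMod p) = r := ZMod.natCast_rightInverse r
    rw [hval, pow_two, ← hr, sub_self]
  obtain ⟨s, t, u, hnz, hdN, hdp, hs2, ht2, hu2⟩ := thue_lattice N p hN hp hpN (r.val : ℤ)
  have hp0 : (0 : ℤ) < p := by exact_mod_cast hp.pos
  have hN0 : (0 : ℤ) < N := by exact_mod_cast (by omega : 0 < N)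
  have hNQ : (N : ℤ) ∣ s ^ 2 + p * t ^ 2 - N * u ^ 2 := by
    have he : s ^ 2 + (p:ℤ) * t ^ 2 - N * u ^ 2
        = (s - t) * (s + t) + ((p:ℤ) + 1) * t ^ 2 - N * u ^ 2 := by ring
    rw [he]
    exact dvd_sub (dvd_add (hdN.mul_right _) (hdvd.mul_right _)) ⟨u ^ 2, rfl⟩
  have hpQ : (p : ℤ) ∣ s ^ 2 + p * t ^ 2 - N * u ^ 2 := by
    have he : s ^ 2 + (p:ℤ) * t ^ 2 - N * u ^ 2
        = (p:ℤ) * t ^ 2 + (s - r.val * u) * (s + r.val * u)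
          + (((r.val : ℤ)) ^ 2 - N) * u ^ 2 := by ring
    rw [he]
    exact dvd_add (dvd_add ⟨t ^ 2, rfl⟩ (hdp.mul_right _)) (hρ.mul_right _)
  have hcop : IsCoprime ((N : ℤ)) ((p : ℤ)) := by
    rw [Int.isCoprime_iff_gcd_eq_one, Int.gcd_natCast_natCast]
    exact (Nat.coprime_comm.mp ((Nat.Prime.coprime_iff_not_dvd hp).mpr hpN))
  obtain ⟨k, hk⟩ := hcop.mul_dvd hNQ hpQ
  have hklt : k < 2 := by nlinarith
  have hkgt : -1 < k := by nlinarith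
  have hk01 : k = 0 ∨ k = 1 := by omega
  rcases hk01 with hk0 | hk1
  · -- s² + p t² = N u²
    rw [hk0, mul_zero] at hk
    have hu0 : u ≠ 0 := by
      rintro rfl
      have hs0 : s = 0 := by nlinarith
      have ht0 : t = 0 := by nlinarith
      exact hnz ⟨hs0, ht0, by rfl⟩
    have hT : 0 < u.natAbs := Int.natAbs_pos.mpr hu0
    apply dc3 (N : ℤ) u.natAbs hT s ((a:ℤ) * t) ((b:ℤ) * t)
    have hcast : ((u.natAbs : ℤ)) ^ 2 = u ^ 2 := by
      rw [Int.natCast_natAbs, sq_abs]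
    rw [hcast]
    linear_combination hk + t ^ 2 * hpa
  · -- s² + p t² - N u² = N p
    rw [hk1, mul_one] at hk
    have hZ : (0 : ℤ) < u ^ 2 + p := by positivity
    have hTnat : 0 < (u ^ 2 + (p:ℤ)).toNat := by omega
    apply dc3 (N : ℤ) (u ^ 2 + (p:ℤ)).toNat hTnat
      (s * u + p * t) ((a:ℤ) * (t * u - s)) ((b:ℤ) * (t * u - s))
    have hcast : (((u ^ 2 + (p:ℤ)).toNat : ℤ)) = u ^ 2 + p := Int.toNat_of_nonneg hZ.le
    rw [hcast]
    linear_combination (u ^ 2 + (p:ℤ)) * hk + (t * u - s) ^ 2 * hpa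

def sg {α : Type*} [Neg α] (b : Bool) (x : α) : α := if b then x else -x

def pk {α : Type*} (i : Fin 6) (v : α × α × α) : α × α × α :=
  match i with
  | 0 => v
  | 1 => (v.1, v.2.2, v.2.1)
  | 2 => (v.2.1, v.1, v.2.2)
  | 3 => (v.2.1, v.2.2, v.1)
  | 4 => (v.2.2, v.1, v.2.1)
  | 5 => (v.2.2, v.2.1, v.1)

lemma key6 (w r : ZMod 6) (hwr : (w = 1 ∧ r = 5) ∨ (w = 2 ∧ r = 2)) :
    ∀ x y z : ZMod 6, x ^ 2 + y ^ 2 + z ^ 2 = r →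
    ∃ (i : Fin 6) (e₁ e₂ e₃ : Bool),
      (pk i (sg e₁ x, sg e₂ y, sg e₃ z)).1 - (pk i (sg e₁ x, sg e₂ y, sg e₃ z)).2.1 = 2 * w ∧
      (pk i (sg e₁ x, sg e₂ y, sg e₃ z)).1 + (pk i (sg e₁ x, sg e₂ y, sg e₃ z)).2.1
        - (pk i (sg e₁ x, sg e₂ y, sg e₃ z)).2.2 = 3 * (2 - w) := by
  rcases hwr with ⟨hw, hr⟩ | ⟨hw, hr⟩ <;> subst hw hr <;> decide

lemma pk_sum_sq (i : Fin 6) (e₁ e₂ e₃ : Bool) (a b c : ℤ) :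
    (pk i (sg e₁ a, sg e₂ b, sg e₃ c)).1 ^ 2 + (pk i (sg e₁ a, sg e₂ b, sg e₃ c)).2.1 ^ 2
      + (pk i (sg e₁ a, sg e₂ b, sg e₃ c)).2.2 ^ 2 = a ^ 2 + b ^ 2 + c ^ 2 := by
  fin_cases i <;> cases e₁ <;> cases e₂ <;> cases e₃ <;> simp [pk, sg] <;> ring

lemma pk_cast (i : Fin 6) (e₁ e₂ e₃ : Bool) (a b c : ℤ) :
    (((pk i (sg e₁ a, sg e₂ b, sg e₃ c)).1 : ℤ) : ZMod 6)
        = (pk i (sg e₁ (a : ZMod 6), sg e₂ (b : ZMod 6), sg e₃ (c : ZMod 6))).1 ∧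
    (((pk i (sg e₁ a, sg e₂ b, sg e₃ c)).2.1 : ℤ) : ZMod 6)
        = (pk i (sg e₁ (a : ZMod 6), sg e₂ (b : ZMod 6), sg e₃ (c : ZMod 6))).2.1 ∧
    (((pk i (sg e₁ a, sg e₂ b, sg e₃ c)).2.2 : ℤ) : ZMod 6)
        = (pk i (sg e₁ (a : ZMod 6), sg e₂ (b : ZMod 6), sg e₃ (c : ZMod 6))).2.2 := by
  fin_cases i <;> cases e₁ <;> cases e₂ <;> cases e₃ <;> simp [pk, sg]

lemma massage (w n a b c : ℤ) (hw : w = 1 ∨ w = 2)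
    (hsum : a ^ 2 + b ^ 2 + c ^ 2 = 6 * n - 19 * w ^ 2) :
    ∃ x y z : ℤ, x ^ 2 + 2 * y ^ 2 + 3 * z ^ 2 + 4 * w ^ 2 + 2 * z * w + 2 * y * w = n := by
  have hc : ((a : ZMod 6)) ^ 2 + ((b : ZMod 6)) ^ 2 + ((c : ZMod 6)) ^ 2
      = 6 * ((n : ℤ) : ZMod 6) - 19 * (((w : ℤ)) : ZMod 6) ^ 2 := by
    have h := congrArg (fun x : ℤ => (x : ZMod 6)) hsum
    push_cast at h
    linear_combination h
  have hr : ((a : ZMod 6)) ^ 2 + ((b : ZMod 6)) ^ 2 + ((c : ZMod 6)) ^ 2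
      = (if w = 1 then (5 : ZMod 6) else 2) := by
    rw [hc, show (6 : ZMod 6) = 0 from rfl, zero_mul, zero_sub]
    rcases hw with hw1 | hw1 <;> subst hw1 <;> simp <;> decide
  obtain ⟨i, e₁, e₂, e₃, hc1, hc2⟩ := key6 ((w : ℤ) : ZMod 6)
      (if w = 1 then (5 : ZMod 6) else 2)
      (by rcases hw with hw1 | hw1 <;> subst hw1 <;> simp <;> decide)
      (a : ZMod 6) (b : ZMod 6) (c : ZMod 6) hr
  obtain ⟨A, B, C, hA, hB, hC⟩ : ∃ A B C : ℤ,
      A = (pk i (sg e₁ a, sg e₂ b, sg e₃ c)).1 ∧ B = (pk i (sg e₁ a, sg e₂ b, sg e₃ c)).2.1 ∧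
      C = (pk i (sg e₁ a, sg e₂ b, sg e₃ c)).2.2 := ⟨_, _, _, rfl, rfl, rfl⟩
  have hsum2 : A ^ 2 + B ^ 2 + C ^ 2 = 6 * n - 19 * w ^ 2 := by
    rw [hA, hB, hC, pk_sum_sq]; exact hsum
  have hd1 : ((6 : ℕ) : ℤ) ∣ A - B - 2 * w := by
    rw [← ZMod.intCast_zmod_eq_zero_iff_dvd]
    push_cast
    rw [hA, hB, (pk_cast i e₁ e₂ e₃ a b c).1, (pk_cast i e₁ e₂ e₃ a b c).2.1, hc1]
    ring
  have hd2 : ((6 : ℕ) : ℤ) ∣ A + B - C - 3 * (2 - w) := by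
    rw [← ZMod.intCast_zmod_eq_zero_iff_dvd]
    push_cast
    rw [hA, hB, hC, (pk_cast i e₁ e₂ e₃ a b c).1, (pk_cast i e₁ e₂ e₃ a b c).2.1,
      (pk_cast i e₁ e₂ e₃ a b c).2.2, hc2]
    push_cast
    ring
  obtain ⟨j, hj⟩ := hd1
  obtain ⟨k, hk⟩ := hd2
  push_cast at hj hk
  obtain ⟨m, hm⟩ : ∃ m : ℤ, C - w = 2 * m := ⟨3 * j + 2 * w + B - 3 - 3 * k, by linarith⟩
  refine ⟨k + m + 1, k + 1 - w, j, ?_⟩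
  have hA' : A = (k + m + 1) + (2 * (k + 1 - w) + w) + (3 * j + w) := by linarith
  have hB' : B = (k + m + 1) + (2 * (k + 1 - w) + w) - (3 * j + w) := by linarith
  have hC' : C = 2 * (k + m + 1) - (2 * (k + 1 - w) + w) := by linarith
  rw [hA', hB', hC'] at hsum2
  have h6 : (6 : ℤ) * ((k + m + 1) ^ 2 + 2 * (k + 1 - w) ^ 2 + 3 * j ^ 2 + 4 * w ^ 2
      + 2 * j * w + 2 * (k + 1 - w) * w) = 6 * n := by linear_combination hsum2
  exact mul_left_cancel₀ (by norm_num : (6 : ℤ) ≠ 0) h6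

theorem stmt_9 (n : ℕ) (hn : 0 < n) :
    ∃ x y z w : ℤ, Int.gcd x (Int.gcd y (Int.gcd z w)) = 1 ∧
      x ^ 2 + 2 * y ^ 2 + 3 * z ^ 2 + 4 * w ^ 2 + 2 * z * w + 2 * y * w = (n : ℤ) := by
  rcases lt_or_ge n 13 with hs | hl
  · interval_cases n
    · exact ⟨1, 0, 0, 0, by decide, by norm_num⟩
    · exact ⟨0, 1, 0, 0, by decide, by norm_num⟩
    · exact ⟨1, 1, 0, 0, by decide, by norm_num⟩
    · exact ⟨1, 0, 1, 0, by decide, by norm_num⟩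
    · exact ⟨0, 1, 1, 0, by decide, by norm_num⟩
    · exact ⟨1, 1, 1, 0, by decide, by norm_num⟩
    · exact ⟨2, 0, 1, 0, by decide, by norm_num⟩
    · exact ⟨2, 0, 0, 1, by decide, by norm_num⟩
    · exact ⟨2, 1, 1, 0, by decide, by norm_num⟩
    · exact ⟨1, 0, 1, 1, by decide, by norm_num⟩
    · exact ⟨0, 2, 1, 0, by decide, by norm_num⟩
    · exact ⟨1, 2, 1, 0, by decide, by norm_num⟩
  · rcases Nat.even_or_odd n with he | ho
    · -- n even, n ≥ 14 : w = 1, N = 6n - 19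
      obtain ⟨q, hq⟩ := he
      have h8 : (6 * n - 19) % 8 = 1 ∨ (6 * n - 19) % 8 = 2 ∨ (6 * n - 19) % 8 = 5
          ∨ (6 * n - 19) % 8 = 6 := by omega
      obtain ⟨a, b, c, habc⟩ := three_squares_s9 (6 * n - 19) h8
      have hcast : ((6 * n - 19 : ℕ) : ℤ) = 6 * (n : ℤ) - 19 * 1 ^ 2 := by
        have h19 : (19 : ℕ) ≤ 6 * n := by omega
        push_cast [h19]
        ring
      obtain ⟨x, y, z, hxyz⟩ := massage 1 (n : ℤ) a b c (Or.inl rfl) (by rw [habc, hcast])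
      exact ⟨x, y, z, 1, by simp, hxyz⟩
    · -- n odd, n ≥ 13 : w = 2, N = 6n - 76
      have ho2 : n % 2 = 1 := Nat.odd_iff.mp ho
      have h8 : (6 * n - 76) % 8 = 1 ∨ (6 * n - 76) % 8 = 2 ∨ (6 * n - 76) % 8 = 5
          ∨ (6 * n - 76) % 8 = 6 := by omega
      obtain ⟨a, b, c, habc⟩ := three_squares_s9 (6 * n - 76) h8
      have hcast : ((6 * n - 76 : ℕ) : ℤ) = 6 * (n : ℤ) - 19 * 2 ^ 2 := by
        have h76 : (76 : ℕ) ≤ 6 * n := by omega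
        push_cast [h76]
        ring
      obtain ⟨x, y, z, hxyz⟩ := massage 2 (n : ℤ) a b c (Or.inr rfl) (by rw [habc, hcast])
      refine ⟨x, y, z, 2, ?_, hxyz⟩
      -- gcd = 1 : the gcd divides 2 and n is odd
      by_contra hgne
      have hd1 : ((Int.gcd x (Int.gcd y (Int.gcd z 2)) : ℕ) : ℤ)
          ∣ ((Int.gcd y (Int.gcd z 2) : ℕ) : ℤ) := Int.gcd_dvd_right _ _
      have hd2 : ((Int.gcd y (Int.gcd z 2) : ℕ) : ℤ) ∣ ((Int.gcd z 2 : ℕ) : ℤ) :=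
        Int.gcd_dvd_right _ _
      have hd3 : ((Int.gcd z 2 : ℕ) : ℤ) ∣ (2 : ℤ) := Int.gcd_dvd_right _ _
      have hdvd2 : (Int.gcd x (Int.gcd y (Int.gcd z 2)) : ℕ) ∣ 2 := by
        exact_mod_cast (hd1.trans hd2).trans hd3
      have hG0 : Int.gcd x (Int.gcd y (Int.gcd z 2)) ≠ 0 := by
        intro h
        rw [h] at hdvd2
        exact absurd (zero_dvd_iff.mp hdvd2) (by norm_num)
      have hGle := Nat.le_of_dvd (by norm_num) hdvd2
      have hG2 : Int.gcd x (Int.gcd y (Int.gcd z 2)) = 2 := by omega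
      -- so 2 divides x, y, z
      have h2x : (2 : ℤ) ∣ x := by
        have := Int.gcd_dvd_left (a := x) (b := (Int.gcd y (Int.gcd z 2) : ℤ))
        rwa [hG2] at this
      have h2y : (2 : ℤ) ∣ y := by
        have hy := Int.gcd_dvd_left (a := y) (b := (Int.gcd z 2 : ℤ))
        have h2g : (2 : ℤ) ∣ ((Int.gcd y (Int.gcd z 2) : ℕ) : ℤ) := by
          have := hd1
          rwa [hG2] at this
        exact h2g.trans hy
      have h2z : (2 : ℤ) ∣ z := by
        have hz := Int.gcd_dvd_left (a := z) (b := (2 : ℤ))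
        have h2g : (2 : ℤ) ∣ ((Int.gcd z 2 : ℕ) : ℤ) := by
          have := hd1.trans hd2
          rwa [hG2] at this
        exact h2g.trans hz
      obtain ⟨x', rfl⟩ := h2x
      obtain ⟨y', rfl⟩ := h2y
      obtain ⟨z', rfl⟩ := h2z
      have hneven : (2 : ℤ) ∣ (n : ℤ) := by
        refine ⟨2 * x' ^ 2 + 4 * y' ^ 2 + 6 * z' ^ 2 + 8 + 4 * z' + 4 * y', ?_⟩
        linear_combination -hxyz
      have : (2 : ℕ) ∣ n := by exact_mod_cast hneven
      omega
end

section
/- For every positive integer n with n ≡ 2 (mod 8), there exist integers x, y, z with x² + y² + 8z² = n. -/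
open Matrix

namespace Stmt16

/-- Integer quadratic form value of a symmetric matrix. -/
def qf {n : ℕ} (A : Matrix (Fin n) (Fin n) ℤ) (v : Fin n → ℤ) : ℤ := v ⬝ᵥ (A.mulVec v)

lemma qf_congr {n : ℕ} (A M : Matrix (Fin n) (Fin n) ℤ) (v : Fin n → ℤ) :
    qf (Mᵀ * A * M) v = qf A (M.mulVec v) := by
  unfold qf
  rw [← Matrix.mulVec_mulVec, ← Matrix.mulVec_mulVec, Matrix.dotProduct_mulVec,
    Matrix.vecMul_transpose]

lemma inv_of_det_one {n : ℕ} (M : Matrix (Fin n) (Fin n) ℤ) (h : M.det = 1) :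
    ∃ N, M * N = 1 ∧ N * M = 1 :=
  ⟨M.adjugate, by rw [Matrix.mul_adjugate, h, one_smul],
    by rw [Matrix.adjugate_mul, h, one_smul]⟩

lemma mulVec_ne_zero {n : ℕ} {M N : Matrix (Fin n) (Fin n) ℤ} (hNM : N * M = 1)
    {v : Fin n → ℤ} (hv : v ≠ 0) : M.mulVec v ≠ 0 := by
  intro h
  apply hv
  have : N.mulVec (M.mulVec v) = 0 := by rw [h, Matrix.mulVec_zero]
  rwa [Matrix.mulVec_mulVec, hNM, Matrix.one_mulVec] at this

lemma qf_transfer {n : ℕ} (A M N : Matrix (Fin n) (Fin n) ℤ) (hMN : M * N = 1)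
    (v : Fin n → ℤ) : qf A v = qf (Mᵀ * A * M) (N.mulVec v) := by
  rw [qf_congr, Matrix.mulVec_mulVec, hMN, Matrix.one_mulVec]

lemma congr_symm {n : ℕ} {A : Matrix (Fin n) (Fin n) ℤ} (M : Matrix (Fin n) (Fin n) ℤ)
    (hA : Aᵀ = A) : (Mᵀ * A * M)ᵀ = Mᵀ * A * M := by
  rw [Matrix.transpose_mul, Matrix.transpose_mul, Matrix.transpose_transpose, hA,
    Matrix.mul_assoc]

lemma congr_det {n : ℕ} {A M : Matrix (Fin n) (Fin n) ℤ} (hM : M.det = 1) :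
    (Mᵀ * A * M).det = A.det := by
  rw [Matrix.det_mul, Matrix.det_mul, Matrix.det_transpose, hM]; ring

lemma congr_cancel {n : ℕ} (A M N : Matrix (Fin n) (Fin n) ℤ) (h1 : M * N = 1) :
    Nᵀ * (Mᵀ * A * M) * N = A := by
  have : Nᵀ * (Mᵀ * A * M) * N = (M * N)ᵀ * A * (M * N) := by
    rw [Matrix.transpose_mul]; noncomm_ring
  rw [this, h1, Matrix.transpose_one, Matrix.one_mul, Matrix.mul_one]

lemma qf_smul {n : ℕ} (A : Matrix (Fin n) (Fin n) ℤ) (c : ℤ) (v : Fin n → ℤ) :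
    qf A (c • v) = c ^ 2 * qf A v := by
  unfold qf
  rw [Matrix.mulVec_smul, smul_dotProduct, dotProduct_smul]
  push_cast [smul_eq_mul]; ring

lemma exists_min {n : ℕ} [NeZero n] (A : Matrix (Fin n) (Fin n) ℤ)
    (hpos : ∀ v, v ≠ 0 → 0 < qf A v) :
    ∃ (a : ℤ) (v : Fin n → ℤ), v ≠ 0 ∧ qf A v = a ∧ ∀ w, w ≠ 0 → a ≤ qf A w := by
  have hne : (Pi.single (0 : Fin n) (1:ℤ)) ≠ (0 : Fin n → ℤ) := by
    intro h
    have := congrFun h 0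
    simp at this
  obtain ⟨a, ⟨v, hv, hva⟩, hmin⟩ := Int.exists_least_of_bdd
    (P := fun x => ∃ v, v ≠ 0 ∧ qf A v = x)
    ⟨0, fun z ⟨v, hv, hvz⟩ => le_of_lt (hvz ▸ hpos v hv)⟩
    ⟨qf A (Pi.single 0 1), Pi.single 0 1, hne, rfl⟩
  exact ⟨a, v, hv, hva, fun w hw => hmin _ ⟨w, hw, rfl⟩⟩


/-- rounding: for t > 0 there is k with |β - k t| ≤ t/2. -/
lemma round_lemma (β t : ℤ) (ht : 0 < t) : ∃ k : ℤ, 2 * |β - k * t| ≤ t := by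
  obtain ⟨k, r, hβ, h2, h3⟩ : ∃ k r : ℤ, β = k * t + r ∧ 0 ≤ r ∧ r < t :=
    ⟨β / t, β % t, by have := Int.mul_ediv_add_emod β t; linarith,
      Int.emod_nonneg β (ne_of_gt ht), Int.emod_lt_of_pos β ht⟩
  rcases le_or_gt (2 * r) t with h | h
  · refine ⟨k, ?_⟩
    rw [show β - k * t = r by linear_combination hβ, abs_of_nonneg h2]
    linarith
  · refine ⟨k + 1, ?_⟩
    rw [show β - (k + 1) * t = r - t by linear_combination hβ, abs_of_nonpos (by linarith)]
    linarith

/-- a minimizer in dim 2 can be taken primitive -/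
lemma min_prim2 (A : Matrix (Fin 2) (Fin 2) ℤ) {a : ℤ} {v : Fin 2 → ℤ}
    (hpos : ∀ w, w ≠ 0 → 0 < qf A w) (hv : v ≠ 0) (hva : qf A v = a)
    (hmin : ∀ w, w ≠ 0 → a ≤ qf A w) : Int.gcd (v 0) (v 1) = 1 := by
  set g : ℕ := Int.gcd (v 0) (v 1) with hg
  have hgd0 : (g : ℤ) ∣ v 0 := Int.gcd_dvd_left _ _
  have hgd1 : (g : ℤ) ∣ v 1 := Int.gcd_dvd_right _ _
  have hgne : g ≠ 0 := by
    intro h0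
    rw [h0] at hg
    have h00 : v 0 = 0 ∧ v 1 = 0 := Int.gcd_eq_zero_iff.mp hg.symm
    apply hv
    funext i; fin_cases i <;> simp [h00.1, h00.2]
  set w : Fin 2 → ℤ := fun i => v i / g with hw
  have hvw : v = (g : ℤ) • w := by
    funext i
    fin_cases i <;> simp [hw, Int.mul_ediv_cancel' hgd0, Int.mul_ediv_cancel' hgd1]
  have hwne : w ≠ 0 := by
    intro h0; apply hv; rw [hvw, h0, smul_zero]
  have key : (g : ℤ) ^ 2 * qf A w = a := by rw [← qf_smul, ← hvw, hva]
  have h1 : a ≤ qf A w := hmin w hwne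
  have h2 : 0 < a := hva ▸ hpos v hv
  have h3 : (1 : ℤ) ≤ g := by exact_mod_cast Nat.one_le_iff_ne_zero.mpr hgne
  nlinarith [sq_nonneg ((g:ℤ) - 1), sq_nonneg ((g:ℤ) + 1)]

lemma min_prim3 (A : Matrix (Fin 3) (Fin 3) ℤ) {a : ℤ} {v : Fin 3 → ℤ}
    (hpos : ∀ w, w ≠ 0 → 0 < qf A w) (hv : v ≠ 0) (hva : qf A v = a)
    (hmin : ∀ w, w ≠ 0 → a ≤ qf A w) :
    Int.gcd (Int.gcd (v 0) (v 1)) (v 2) = 1 := by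
  set g : ℕ := Int.gcd (Int.gcd (v 0) (v 1)) (v 2) with hg
  have hgd01 : (g : ℤ) ∣ (Int.gcd (v 0) (v 1) : ℤ) := Int.gcd_dvd_left _ _
  have hgd0 : (g : ℤ) ∣ v 0 := hgd01.trans (Int.gcd_dvd_left _ _)
  have hgd1 : (g : ℤ) ∣ v 1 := hgd01.trans (Int.gcd_dvd_right _ _)
  have hgd2 : (g : ℤ) ∣ v 2 := Int.gcd_dvd_right _ _
  have hgne : g ≠ 0 := by
    intro h0
    rw [h0] at hg
    have h00 := Int.gcd_eq_zero_iff.mp hg.symm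
    have h01 := Int.gcd_eq_zero_iff.mp (Int.natCast_eq_zero.mp h00.1)
    apply hv
    funext i; fin_cases i <;> simp [h01.1, h01.2, h00.2]
  set w : Fin 3 → ℤ := fun i => v i / g with hw
  have hvw : v = (g : ℤ) • w := by
    funext i
    fin_cases i <;>
      simp [hw, Int.mul_ediv_cancel' hgd0, Int.mul_ediv_cancel' hgd1, Int.mul_ediv_cancel' hgd2]
  have hwne : w ≠ 0 := by
    intro h0; apply hv; rw [hvw, h0, smul_zero]
  have key : (g : ℤ) ^ 2 * qf A w = a := by rw [← qf_smul, ← hvw, hva]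
  have h1 : a ≤ qf A w := hmin w hwne
  have h2 : 0 < a := hva ▸ hpos v hv
  have h3 : (1 : ℤ) ≤ g := by exact_mod_cast Nat.one_le_iff_ne_zero.mpr hgne
  nlinarith [sq_nonneg ((g:ℤ) - 1), sq_nonneg ((g:ℤ) + 1)]

/-- extend a primitive pair to a 2x2 unimodular matrix as first column -/
lemma extend2 (p q : ℤ) (h : Int.gcd p q = 1) :
    ∃ M : Matrix (Fin 2) (Fin 2) ℤ, M.det = 1 ∧ M 0 0 = p ∧ M 1 0 = q := by
  refine ⟨!![p, -(Int.gcdB p q); q, Int.gcdA p q], ?_, rfl, rfl⟩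
  have hb := Int.gcd_eq_gcd_ab p q
  rw [h] at hb
  rw [Matrix.det_fin_two_of]
  push_cast at hb ⊢
  linarith [hb]

/-- extend a primitive triple to a 3x3 unimodular matrix as first column -/
lemma extend3 (v : Fin 3 → ℤ) (h : Int.gcd (Int.gcd (v 0) (v 1)) (v 2) = 1) :
    ∃ M : Matrix (Fin 3) (Fin 3) ℤ, M.det = 1 ∧ M 0 0 = v 0 ∧ M 1 0 = v 1 ∧ M 2 0 = v 2 := by
  set g : ℕ := Int.gcd (v 0) (v 1) with hg
  rcases eq_or_ne g 0 with hg0 | hg0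
  · have h00 := Int.gcd_eq_zero_iff.mp (hg.symm.trans hg0)
    have hv0 : v 0 = 0 := h00.1
    have hv1 : v 1 = 0 := h00.2
    rw [hg0] at h
    have habs : (v 2).natAbs = 1 := by simpa [Int.gcd] using h
    rcases Int.natAbs_eq_iff.mp habs with h2 | h2
    · exact ⟨!![0, 1, 0; 0, 0, 1; v 2, 0, 0], by
        rw [Matrix.det_fin_three]; simp [h2], by simp [hv0], by simp [hv1], rfl⟩
    · exact ⟨!![0, 1, 0; 0, 0, -1; v 2, 0, 0], by
        rw [Matrix.det_fin_three]; simp [h2], by simp [hv0], by simp [hv1], rfl⟩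
  · -- g ≠ 0
    have hgd0 : (g : ℤ) ∣ v 0 := Int.gcd_dvd_left _ _
    have hgd1 : (g : ℤ) ∣ v 1 := Int.gcd_dvd_right _ _
    set p' : ℤ := v 0 / g with hp'
    set q' : ℤ := v 1 / g with hq'
    have hp'e : (g : ℤ) * p' = v 0 := Int.mul_ediv_cancel' hgd0
    have hq'e : (g : ℤ) * q' = v 1 := Int.mul_ediv_cancel' hgd1
    have hbez1 := Int.gcd_eq_gcd_ab (v 0) (v 1)
    rw [← hg] at hbez1
    set α : ℤ := Int.gcdA (v 0) (v 1)
    set β : ℤ := Int.gcdB (v 0) (v 1)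
    -- (g : ℤ) = v 0 * α + v 1 * β
    have hbez2 := Int.gcd_eq_gcd_ab ((g : ℤ)) (v 2)
    rw [show Int.gcd ((g : ℤ)) (v 2) = 1 from h] at hbez2
    set γ : ℤ := Int.gcdA ((g : ℤ)) (v 2)
    set δ : ℤ := Int.gcdB ((g : ℤ)) (v 2)
    -- 1 = g * γ + v 2 * δ
    have hunit : p' * α + q' * β = 1 := by
      have hgz : (g : ℤ) ≠ 0 := by exact_mod_cast hg0
      apply mul_left_cancel₀ hgz
      rw [mul_one]
      calc (g:ℤ) * (p' * α + q' * β) = ((g:ℤ) * p') * α + ((g:ℤ) * q') * β := by ring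
        _ = v 0 * α + v 1 * β := by rw [hp'e, hq'e]
        _ = (g : ℤ) := hbez1.symm
    refine ⟨!![v 0, -β, -δ * p'; v 1, α, -δ * q'; v 2, 0, γ], ?_, rfl, rfl, rfl⟩
    rw [Matrix.det_fin_three]
    simp
    linear_combination (-γ) * hbez1 + (v 2 * δ) * hunit + (-1) * hbez2

-- real content of part 3
lemma qf2_expand (A : Matrix (Fin 2) (Fin 2) ℤ) (x y : ℤ) :
    qf A ![x, y] = A 0 0 * x^2 + A 0 1 * x * y + A 1 0 * x * y + A 1 1 * y^2 := by
  simp [qf, Matrix.mulVec, dotProduct, Fin.sum_univ_two]; ring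

lemma vec2_ne_zero (x y : ℤ) (h : x ≠ 0 ∨ y ≠ 0) : ![x, y] ≠ 0 := by
  intro h0
  rcases h with h | h
  · exact h (by simpa using congrFun h0 0)
  · exact h (by simpa using congrFun h0 1)

lemma conj2 (A M : Matrix (Fin 2) (Fin 2) ℤ) :
    Mᵀ * A * M = !![M 0 0 * (A 0 0 * M 0 0 + A 0 1 * M 1 0) + M 1 0 * (A 1 0 * M 0 0 + A 1 1 * M 1 0),
      M 0 0 * (A 0 0 * M 0 1 + A 0 1 * M 1 1) + M 1 0 * (A 1 0 * M 0 1 + A 1 1 * M 1 1);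
      M 0 1 * (A 0 0 * M 0 0 + A 0 1 * M 1 0) + M 1 1 * (A 1 0 * M 0 0 + A 1 1 * M 1 0),
      M 0 1 * (A 0 0 * M 0 1 + A 0 1 * M 1 1) + M 1 1 * (A 1 0 * M 0 1 + A 1 1 * M 1 1)] := by
  ext i j
  fin_cases i <;> fin_cases j <;>
    simp [Matrix.mul_apply, Fin.sum_univ_two] <;> ring

lemma binary_reduce (A : Matrix (Fin 2) (Fin 2) ℤ) (hsym : Aᵀ = A)
    (hpos : ∀ v, v ≠ 0 → 0 < qf A v) :
    ∃ (M : Matrix (Fin 2) (Fin 2) ℤ) (t β γ : ℤ),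
      M.det = 1 ∧ Mᵀ * A * M = !![t, β; β, γ] ∧ 0 < t ∧
      (∀ v, v ≠ 0 → t ≤ qf A v) ∧ (∃ v, v ≠ 0 ∧ qf A v = t) ∧ t ≤ γ ∧ 2 * |β| ≤ t ∧
      t * γ - β ^ 2 = A.det := by
  obtain ⟨a, v, hv, hva, hmin⟩ := exists_min A hpos
  have ha : 0 < a := hva ▸ hpos v hv
  obtain ⟨M₀, hdM₀, hM₀00, hM₀10⟩ := extend2 (v 0) (v 1) (min_prim2 A hpos hv hva hmin)
  obtain ⟨N₀, hMN₀, hNM₀⟩ := inv_of_det_one M₀ hdM₀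
  set B := M₀ᵀ * A * M₀ with hB
  have hBsym : Bᵀ = B := congr_symm M₀ hsym
  have hB10 : B 1 0 = B 0 1 := by
    conv_lhs => rw [← hBsym]
    rfl
  have hMv : M₀.mulVec ![1, 0] = v := by
    funext i
    fin_cases i <;>
      simp [Matrix.mulVec, dotProduct, Fin.sum_univ_two, hM₀00, hM₀10]
  have hB00 : B 0 0 = a := by
    have h1 : qf B ![1, 0] = a := by rw [hB, qf_congr, hMv, hva]
    rw [qf2_expand] at h1
    linarith [h1]
  obtain ⟨k, hk⟩ := round_lemma (B 0 1) a ha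
  set S : Matrix (Fin 2) (Fin 2) ℤ := !![1, -k; 0, 1] with hS
  have hdS : S.det = 1 := by rw [hS, Matrix.det_fin_two_of]; norm_num
  set M := M₀ * S with hM
  have hdM : M.det = 1 := by rw [hM, Matrix.det_mul, hdM₀, hdS]; norm_num
  have hMAM : Mᵀ * A * M = Sᵀ * B * S := by
    rw [hM, hB, Matrix.transpose_mul]; noncomm_ring
  set γ : ℤ := qf B ![-k, 1] with hγ
  have hC : Mᵀ * A * M = !![a, B 0 1 - k * a; B 0 1 - k * a, γ] := by
    rw [hMAM, conj2]
    ext i j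
    fin_cases i <;> fin_cases j <;>
      simp [hS, hB00, hB10, hγ, qf2_expand] <;> ring
  have hγa : a ≤ γ := by
    rw [hγ, hB, qf_congr]
    exact hmin _ (mulVec_ne_zero hNM₀ (vec2_ne_zero _ _ (Or.inr one_ne_zero)))
  refine ⟨M, a, B 0 1 - k * a, γ, hdM, hC, ha, hmin, ⟨v, hv, hva⟩, hγa, hk, ?_⟩
  have h2 : (Mᵀ * A * M).det = A.det := congr_det hdM
  rw [hC, Matrix.det_fin_two_of] at h2
  linear_combination h2

lemma binary_min (A : Matrix (Fin 2) (Fin 2) ℤ) (hsym : Aᵀ = A)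
    (hpos : ∀ v, v ≠ 0 → 0 < qf A v) :
    ∃ t : ℤ, 0 < t ∧ (∀ v, v ≠ 0 → t ≤ qf A v) ∧ (∃ v, v ≠ 0 ∧ qf A v = t) ∧
      3 * t ^ 2 ≤ 4 * A.det := by
  obtain ⟨M, t, β, γ, _, _, ht, hmin, hatt, hγ, hβ, hdet⟩ := binary_reduce A hsym hpos
  refine ⟨t, ht, hmin, hatt, ?_⟩
  have h1 : (2 * |β|) ^ 2 ≤ t ^ 2 := by
    have := abs_nonneg β
    nlinarith
  have h2 : β ^ 2 = |β| ^ 2 := (sq_abs β).symm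
  nlinarith [mul_le_mul_of_nonneg_left hγ (le_of_lt ht)]

lemma binary_id (A : Matrix (Fin 2) (Fin 2) ℤ) (hsym : Aᵀ = A)
    (hpos : ∀ v, v ≠ 0 → 0 < qf A v) (hdet : A.det = 1) :
    ∃ P : Matrix (Fin 2) (Fin 2) ℤ, A = Pᵀ * P := by
  obtain ⟨M, t, β, γ, hdM, hC, ht, hmin, hatt, hγ, hβ, hdetC⟩ := binary_reduce A hsym hpos
  rw [hdet] at hdetC
  have ht1 : t = 1 := by nlinarith [abs_nonneg β, sq_abs β]
  have hβ0 : β = 0 := by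
    rw [ht1] at hβ
    have := abs_nonneg β
    have : |β| = 0 := by omega
    exact abs_eq_zero.mp this
  have hγ1 : γ = 1 := by rw [ht1, hβ0] at hdetC; linarith
  rw [ht1, hβ0, hγ1] at hC
  have hC1 : Mᵀ * A * M = 1 := by rw [hC, Matrix.one_fin_two]
  obtain ⟨N, hMN, hNM⟩ := inv_of_det_one M hdM
  refine ⟨N, ?_⟩
  have := congr_cancel A M N hMN
  rw [hC1] at this
  rw [← this, Matrix.mul_one]


-- part 4
lemma a_eq_one_arith (a t β q : ℤ) (ha : 0 < a) (ht : 0 < t) (hk : 2 * |β| ≤ a)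
    (h1 : a * q = β ^ 2 + t) (h4 : a ≤ q) (htb : 3 * t ^ 2 ≤ 4 * a) : a = 1 := by
  have habs : 0 ≤ |β| := abs_nonneg β
  have hb2 : 4 * β ^ 2 ≤ a ^ 2 := by nlinarith [sq_abs β]
  have e0 : a * a ≤ a * q := mul_le_mul_of_nonneg_left h4 ha.le
  have e1 : 3 * a ^ 2 ≤ 4 * t := by nlinarith
  have e3 : 9 * a ^ 4 ≤ 16 * t ^ 2 := by
    nlinarith [mul_nonneg (by linarith : (0:ℤ) ≤ 4 * t - 3 * a ^ 2)
      (by nlinarith : (0:ℤ) ≤ 4 * t + 3 * a ^ 2)]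
  have e4 : 27 * a ^ 4 ≤ 64 * a := by nlinarith
  have e5 : a ≤ 1 := by
    by_contra hcon
    push_neg at hcon
    have h2a : 2 ≤ a := hcon
    nlinarith [mul_nonneg (mul_nonneg (by linarith : (0:ℤ) ≤ a - 2) (by linarith : (0:ℤ) ≤ a))
      (by linarith : (0:ℤ) ≤ a), sq_nonneg a, mul_pos ha ha]
  omega

lemma pos_cancel_sq (a x y : ℤ) (ha : 0 < a) (h1 : a * x = a ^ 2 * y) (hx : 0 < x) : 0 < y := by
  nlinarith [mul_pos ha hx]

lemma qf3_expand (A : Matrix (Fin 3) (Fin 3) ℤ) (x y z : ℤ) :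
    qf A ![x, y, z] = A 0 0 * x^2 + A 1 1 * y^2 + A 2 2 * z^2
      + (A 0 1 + A 1 0) * x * y + (A 0 2 + A 2 0) * x * z + (A 1 2 + A 2 1) * y * z := by
  simp [qf, Matrix.mulVec, dotProduct, Fin.sum_univ_three]; ring

lemma vec3_ne_zero (x y z : ℤ) (h : x ≠ 0 ∨ y ≠ 0 ∨ z ≠ 0) : ![x, y, z] ≠ 0 := by
  intro h0
  rcases h with h | h | h
  · exact h (by simpa using congrFun h0 0)
  · exact h (by simpa using congrFun h0 1)
  · exact h (by simpa using congrFun h0 2)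

lemma qf_PtP2 (P : Matrix (Fin 2) (Fin 2) ℤ) (w : Fin 2 → ℤ) :
    qf (Pᵀ * P) w = (P.mulVec w 0) ^ 2 + (P.mulVec w 1) ^ 2 := by
  have h1 : Pᵀ * P = Pᵀ * 1 * P := by rw [Matrix.mul_one]
  rw [h1, qf_congr]
  simp [qf, Matrix.one_mulVec, dotProduct, Fin.sum_univ_two, sq]

lemma ternary_rep (A : Matrix (Fin 3) (Fin 3) ℤ) (hsym : Aᵀ = A)
    (hpos : ∀ v, v ≠ 0 → 0 < qf A v) (hdet : A.det = 1) :
    ∃ x y z : ℤ, qf A ![1, 0, 0] = x ^ 2 + y ^ 2 + z ^ 2 := by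
  obtain ⟨a, v, hv, hva, hmin⟩ := exists_min A hpos
  have ha : 0 < a := hva ▸ hpos v hv
  obtain ⟨M₁, hdM₁, hc0, hc1, hc2⟩ := extend3 v (min_prim3 A hpos hv hva hmin)
  obtain ⟨N₁, hMN₁, hNM₁⟩ := inv_of_det_one M₁ hdM₁
  set B := M₁ᵀ * A * M₁ with hB
  have hBsym : Bᵀ = B := congr_symm M₁ hsym
  have hBdet : B.det = 1 := by rw [hB, congr_det hdM₁, hdet]
  have hBpos : ∀ w, w ≠ 0 → 0 < qf B w := fun w hw => by
    rw [hB, qf_congr]; exact hpos _ (mulVec_ne_zero hNM₁ hw)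
  have hBmin : ∀ w, w ≠ 0 → a ≤ qf B w := fun w hw => by
    rw [hB, qf_congr]; exact hmin _ (mulVec_ne_zero hNM₁ hw)
  have hMv : M₁.mulVec ![1, 0, 0] = v := by
    funext i
    fin_cases i <;>
      simp [Matrix.mulVec, dotProduct, Fin.sum_univ_three, hc0, hc1, hc2]
  have hB00 : B 0 0 = a := by
    have h1 : qf B ![1, 0, 0] = a := by rw [hB, qf_congr, hMv, hva]
    rw [qf3_expand] at h1
    linarith [h1]
  have hB10 : B 1 0 = B 0 1 := by
    conv_lhs => rw [← hBsym]
    rfl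
  have hB20 : B 2 0 = B 0 2 := by
    conv_lhs => rw [← hBsym]
    rfl
  have hB21 : B 2 1 = B 1 2 := by
    conv_lhs => rw [← hBsym]
    rfl
  set b₁ := B 0 1 with hb₁
  set b₂ := B 0 2 with hb₂
  set H : Matrix (Fin 2) (Fin 2) ℤ :=
    !![a * B 1 1 - b₁^2, a * B 1 2 - b₁ * b₂; a * B 1 2 - b₁ * b₂, a * B 2 2 - b₂^2] with hH
  have hH00 : H 0 0 = a * B 1 1 - b₁^2 := rfl
  have hH01 : H 0 1 = a * B 1 2 - b₁ * b₂ := rfl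
  have hH10 : H 1 0 = a * B 1 2 - b₁ * b₂ := rfl
  have hH11 : H 1 1 = a * B 2 2 - b₂^2 := rfl
  have hHsym : Hᵀ = H := by
    ext i j
    fin_cases i <;> fin_cases j <;> rfl
  have key : ∀ x y z : ℤ,
      a * qf B ![x, y, z] = (a * x + b₁ * y + b₂ * z) ^ 2 + qf H ![y, z] := by
    intro x y z
    rw [qf3_expand, qf2_expand, hH00, hH01, hH10, hH11, hB10, hB20, hB21, hB00, ← hb₁, ← hb₂]
    ring
  have hHdet : H.det = a := by
    have hBdet3 := hBdet
    rw [Matrix.det_fin_three, hB10, hB20, hB21, hB00, ← hb₁, ← hb₂] at hBdet3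
    rw [Matrix.det_fin_two_of]
    linear_combination a * hBdet3
  have hHpos : ∀ w, w ≠ 0 → 0 < qf H w := by
    intro w hw
    have hw01 : w 0 ≠ 0 ∨ w 1 ≠ 0 := by
      by_contra hcon
      push_neg at hcon
      apply hw
      funext i; fin_cases i <;> simp [hcon.1, hcon.2]
    have hu : (![-(b₁ * w 0 + b₂ * w 1), a * w 0, a * w 1] : Fin 3 → ℤ) ≠ 0 := by
      apply vec3_ne_zero
      rcases hw01 with h | h
      · exact Or.inr (Or.inl (mul_ne_zero (ne_of_gt ha) h))
      · exact Or.inr (Or.inr (mul_ne_zero (ne_of_gt ha) h))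
    have h1 := key (-(b₁ * w 0 + b₂ * w 1)) (a * w 0) (a * w 1)
    have h0 : (a * -(b₁ * w 0 + b₂ * w 1) + b₁ * (a * w 0) + b₂ * (a * w 1)) = 0 := by ring
    rw [h0] at h1
    have h2 : qf H ![a * w 0, a * w 1] = a ^ 2 * qf H ![w 0, w 1] := by
      rw [qf2_expand, qf2_expand]; ring
    have h3 : (![w 0, w 1] : Fin 2 → ℤ) = w := by funext i; fin_cases i <;> rfl
    rw [h2, h3] at h1
    have h4 : 0 < qf B ![-(b₁ * w 0 + b₂ * w 1), a * w 0, a * w 1] := hBpos _ hu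
    have h5 : a * qf B ![-(b₁ * w 0 + b₂ * w 1), a * w 0, a * w 1] = a ^ 2 * qf H w := by
      linarith [h1]
    exact pos_cancel_sq a _ _ ha h5 h4
  obtain ⟨t, ht, htmin, ⟨w, hwne, hwt⟩, htbound⟩ := binary_min H hHsym hHpos
  rw [hHdet] at htbound
  -- get a = 1
  obtain ⟨k, hk⟩ := round_lemma (b₁ * w 0 + b₂ * w 1) a ha
  have ha1 : a = 1 := by
    have hu : (![-k, w 0, w 1] : Fin 3 → ℤ) ≠ 0 := by
      apply vec3_ne_zero
      by_contra hcon
      push_neg at hcon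
      apply hwne
      funext i; fin_cases i <;> simp [hcon.2.1, hcon.2.2]
    have h1 := key (-k) (w 0) (w 1)
    have h3 : qf H ![w 0, w 1] = t := by
      rw [show (![w 0, w 1] : Fin 2 → ℤ) = w by funext i; fin_cases i <;> rfl, hwt]
    have h4 : a ≤ qf B ![-k, w 0, w 1] := hBmin _ hu
    rw [h3, show a * (-k) + b₁ * w 0 + b₂ * w 1 = (b₁ * w 0 + b₂ * w 1) - k * a from by ring]
      at h1
    exact a_eq_one_arith a t _ _ ha ht hk h1 h4 htbound
  -- now a = 1
  rw [ha1] at hHdet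
  obtain ⟨P, hP⟩ := binary_id H hHsym hHpos hHdet
  -- express qf A ![1,0,0]
  set u : Fin 3 → ℤ := N₁.mulVec ![1, 0, 0] with hu
  have hval : qf A ![1, 0, 0] = qf B u := by
    rw [hu, hB, ← qf_transfer A M₁ N₁ hMN₁]
  have huu : (![u 0, u 1, u 2] : Fin 3 → ℤ) = u := by
    funext i; fin_cases i <;> rfl
  have h1 := key (u 0) (u 1) (u 2)
  rw [ha1] at h1
  rw [huu] at h1
  refine ⟨u 0 + b₁ * u 1 + b₂ * u 2, (P.mulVec ![u 1, u 2]) 0, (P.mulVec ![u 1, u 2]) 1, ?_⟩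
  have h2 : qf H ![u 1, u 2] = (P.mulVec ![u 1, u 2]) 0 ^ 2 + (P.mulVec ![u 1, u 2]) 1 ^ 2 := by
    rw [hP, qf_PtP2]
  rw [hval]
  have h3 : qf B u = (1 * u 0 + b₁ * u 1 + b₂ * u 2) ^ 2 + qf H ![u 1, u 2] := by
    linarith [h1]
  rw [h3, h2]
  ring


lemma zero_of_squares (mz pz S x y z B : ℤ) (hm : 0 < mz) (hp : 0 < pz)
    (hS : mz * pz * S ≤ 0)
    (hrel : mz * pz * S = pz * (mz * x + y) ^ 2 + y ^ 2 + mz * (pz * z - B * y) ^ 2) :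
    x = 0 ∧ y = 0 ∧ z = 0 := by
  have ht1 : (0:ℤ) ≤ pz * (mz * x + y) ^ 2 := by positivity
  have ht2 : (0:ℤ) ≤ mz * (pz * z - B * y) ^ 2 := by positivity
  have hsq3 := sq_nonneg y
  have hy2 : y ^ 2 = 0 := le_antisymm (by nlinarith) hsq3
  have hy : y = 0 := pow_eq_zero_iff (two_ne_zero) |>.mp hy2
  have hx2 : (mz * x + y) ^ 2 = 0 := by
    have h6 : pz * (mz * x + y) ^ 2 ≤ 0 := by nlinarith
    nlinarith [sq_nonneg (mz * x + y)]
  have hz2 : (pz * z - B * y) ^ 2 = 0 := by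
    have h6 : mz * (pz * z - B * y) ^ 2 ≤ 0 := by nlinarith
    nlinarith [sq_nonneg (pz * z - B * y)]
  have hx : x = 0 := by
    have h5 : mz * x + y = 0 := pow_eq_zero_iff (two_ne_zero) |>.mp hx2
    rw [hy, add_zero] at h5
    rcases mul_eq_zero.mp h5 with hh | hh
    · exact absurd hh (by linarith)
    · exact hh
  have hz : z = 0 := by
    have h5 : pz * z - B * y = 0 := pow_eq_zero_iff (two_ne_zero) |>.mp hz2
    rw [hy, mul_zero, sub_zero] at h5
    rcases mul_eq_zero.mp h5 with hh | hh
    · exact absurd hh (by linarith)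
    · exact hh
  exact ⟨hx, hy, hz⟩

set_option maxHeartbeats 1000000 in
lemma three_squares (m : ℕ) (hm4 : m % 4 = 1) : ∃ x y z : ℤ, (m : ℤ) = x^2 + y^2 + z^2 := by
  have hm1 : 1 ≤ m := by omega
  haveI : NeZero (4 * m) := ⟨by omega⟩
  have hmodd : Odd m := Nat.odd_iff.mpr (by omega)
  set c : ℕ := 2 * m - 1 with hc
  have hunit : IsUnit ((c : ZMod (4 * m))) := by
    apply IsUnit.of_mul_eq_one ((c : ZMod (4 * m)))
    obtain ⟨m', hm'⟩ : ∃ m', m = m' + 1 := ⟨m - 1, by omega⟩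
    have hcc : c * c = 4 * m * m' + 1 := by
      have hc' : c = 2 * m' + 1 := by omega
      rw [hc', hm']; ring
    rw [← Nat.cast_mul, hcc, Nat.cast_add, Nat.cast_mul, ZMod.natCast_self, zero_mul, zero_add,
      Nat.cast_one]
  obtain ⟨p, hpgt, hpp, hpmod⟩ := Nat.forall_exists_prime_gt_and_eq_mod hunit (4 * m)
  have hmod : p ≡ c [MOD 4 * m] := (ZMod.natCast_eq_natCast_iff _ _ _).mp hpmod
  have hp4 : p % 4 = 1 := by
    have h4 : p % 4 = c % 4 := hmod.of_dvd ⟨m, rfl⟩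
    omega
  have hpodd : Odd p := hpp.odd_of_ne_two (by omega)
  have hmdvd : m ∣ p + 1 := by
    have h1 : p % m = c % m := hmod.of_dvd ⟨4, by ring⟩
    have h2 : (p + 1) % m = (c + 1) % m := by
      exact (Nat.ModEq.add_right 1 h1 : _)
    have h3 : (c + 1) % m = 0 := by
      rw [show c + 1 = 2 * m by omega]
      exact Nat.mul_mod_left 2 m
    exact Nat.dvd_of_mod_eq_zero (h2.trans h3)
  obtain ⟨D, hD⟩ : ∃ D : ℤ, (p : ℤ) + 1 = (m : ℤ) * D := by
    obtain ⟨d, hd⟩ := hmdvd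
    exact ⟨d, by exact_mod_cast congrArg (Nat.cast : ℕ → ℤ) hd⟩
  have hmZ : (1 : ℤ) ≤ (m : ℤ) := by exact_mod_cast hm1
  have hpZ : (4 : ℤ) * m < p := by exact_mod_cast hpgt
  have hDpos : 0 < D := by nlinarith
  haveI : Fact p.Prime := ⟨hpp⟩
  have hmp0 : ((m : ℤ) : ZMod p) ≠ 0 := by
    rw [Int.cast_natCast]
    intro h
    have := (ZMod.natCast_eq_zero_iff m p).mp h
    have := Nat.le_of_dvd (by omega) this
    omega
  -- Jacobi computation
  have hpm1 : (p : ℤ) % (m : ℕ) = (-1) % (m : ℕ) := by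
    have : ((m : ℕ) : ℤ) ∣ -1 - (p : ℤ) := ⟨-D, by linear_combination -hD⟩
    exact Int.modEq_iff_dvd.mpr this
  have hJm : jacobiSym ((m : ℕ) : ℤ) p = 1 := by
    rw [jacobiSym.quadratic_reciprocity_one_mod_four hm4 hpodd,
      jacobiSym.mod_left' hpm1, jacobiSym.at_neg_one hmodd, ZMod.χ₄_nat_one_mod_four hm4]
  have hleg : legendreSym p ((m : ℕ) : ℤ) = 1 := by
    rw [jacobiSym.legendreSym.to_jacobiSym]; exact hJm
  have hsqm : IsSquare (((m : ℕ) : ℤ) : ZMod p) :=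
    (legendreSym.eq_one_iff p (by exact_mod_cast hmp0)).mp hleg
  obtain ⟨r, hr⟩ := hsqm
  have hr0 : r ≠ 0 := by
    intro h
    apply hmp0
    rw [hr, h, mul_zero]
  have hmD1 : ((m : ℤ) : ZMod p) * ((D : ℤ) : ZMod p) = 1 := by
    have h0 := congrArg (fun x : ℤ => ((x : ZMod p))) hD
    simp only [Int.cast_add, Int.cast_mul, Int.cast_one, Int.cast_natCast] at h0
    rw [ZMod.natCast_self] at h0
    rw [Int.cast_natCast]
    linear_combination -h0
  have hsqD : IsSquare ((D : ZMod p)) := by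
    refine ⟨r⁻¹, ?_⟩
    have h2 : (r * r) * (D : ZMod p) = 1 := by
      rw [← hr]
      exact_mod_cast hmD1
    field_simp
    linear_combination h2
  have hsqneg : IsSquare (-(D : ZMod p)) := by
    have h3 : -(D : ZMod p) = (-1) * (D : ZMod p) := by ring
    rw [h3]
    exact (ZMod.exists_sq_eq_neg_one_iff.mpr (by omega)).mul hsqD
  obtain ⟨s, hs⟩ := hsqneg
  set b : ℤ := (s.val : ℤ) with hb
  have hbs : ((b : ℤ) : ZMod p) = s := by
    rw [hb]
    push_cast
    exact ZMod.natCast_zmod_val s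
  obtain ⟨q, hq⟩ : ∃ q : ℤ, b ^ 2 + D = (p : ℤ) * q := by
    have h0 : ((b ^ 2 + D : ℤ) : ZMod p) = 0 := by
      push_cast
      have hbs' : ((b : ℤ) : ZMod p) = s := hbs
      push_cast at hbs'
      rw [hbs']
      linear_combination -hs
    exact (ZMod.intCast_zmod_eq_zero_iff_dvd _ p).mp h0
  -- build the ternary form
  set A : Matrix (Fin 3) (Fin 3) ℤ := !![(m : ℤ), 1, 0; 1, q, -b; 0, -b, (p : ℤ)] with hA
  have hA00 : A 0 0 = (m : ℤ) := rfl
  have hA01 : A 0 1 = 1 := rfl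
  have hA02 : A 0 2 = 0 := rfl
  have hA10 : A 1 0 = 1 := rfl
  have hA11 : A 1 1 = q := rfl
  have hA12 : A 1 2 = -b := rfl
  have hA20 : A 2 0 = 0 := rfl
  have hA21 : A 2 1 = -b := rfl
  have hA22 : A 2 2 = (p : ℤ) := rfl
  have hsym : Aᵀ = A := by
    ext i j
    fin_cases i <;> fin_cases j <;> rfl
  have hdet : A.det = 1 := by
    rw [Matrix.det_fin_three, hA00, hA01, hA02, hA10, hA11, hA12, hA20, hA21, hA22]
    linear_combination (-(m : ℤ)) * hq - hD
  have hkey : ∀ x y z : ℤ, (m : ℤ) * (p : ℤ) * qf A ![x, y, z]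
      = (p : ℤ) * ((m : ℤ) * x + y) ^ 2 + y ^ 2 + (m : ℤ) * ((p : ℤ) * z - b * y) ^ 2 := by
    intro x y z
    rw [qf3_expand, hA00, hA01, hA02, hA10, hA11, hA12, hA20, hA21, hA22]
    linear_combination (-(y ^ 2) * (m : ℤ)) * hq + (-(y ^ 2)) * hD
  have hpZ0 : (0 : ℤ) < (p : ℤ) := by linarith
  have hmZ0 : (0 : ℤ) < (m : ℤ) := by linarith
  have hpos : ∀ v, v ≠ 0 → 0 < qf A v := by
    intro v hv
    by_contra hle
    push_neg at hle
    have hv3 : (![v 0, v 1, v 2] : Fin 3 → ℤ) = v := by funext i; fin_cases i <;> rfl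
    have h1 := hkey (v 0) (v 1) (v 2)
    rw [hv3] at h1
    have h2 : (m : ℤ) * (p : ℤ) * qf A v ≤ 0 :=
      mul_nonpos_of_nonneg_of_nonpos (by positivity) hle
    obtain ⟨hx, hy, hz⟩ := zero_of_squares (m : ℤ) (p : ℤ) (qf A v) (v 0) (v 1) (v 2) b
      hmZ0 hpZ0 h2 h1
    exact hv (by funext i; fin_cases i <;> simp [hx, hy, hz])
  obtain ⟨x, y, z, hxyz⟩ := ternary_rep A hsym hpos hdet
  refine ⟨x, y, z, ?_⟩
  rw [← hxyz, qf3_expand, hA00, hA01, hA02, hA10, hA11, hA12, hA20, hA21, hA22]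
  ring

theorem main (n : ℕ) (hn : 0 < n) (h : n % 8 = 2) :
    ∃ x y z : ℤ, x ^ 2 + y ^ 2 + 8 * z ^ 2 = (n : ℤ) := by
  set m : ℕ := n / 2 with hm
  have hn2 : n = 2 * m := by omega
  have hm4 : m % 4 = 1 := by omega
  obtain ⟨x, y, z, hxyz⟩ := three_squares m hm4
  have hnZ : (n : ℤ) = 2 * (m : ℤ) := by exact_mod_cast congrArg (Nat.cast : ℕ → ℤ) hn2
  have hm4Z : (m : ℤ) % 4 = 1 := by
    have h1 : ((m % 4 : ℕ) : ℤ) = 1 := by exact_mod_cast hm4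
    rwa [Int.natCast_mod] at h1
  rcases Int.even_or_odd z with ⟨t, hzt⟩ | ⟨c, hzc⟩
  · refine ⟨x + y, x - y, t, ?_⟩
    have hz2 : z ^ 2 = 4 * t ^ 2 := by rw [hzt]; ring
    linear_combination -hnZ - 2 * hxyz - 2 * hz2
  · rcases Int.even_or_odd y with ⟨t, hyt⟩ | ⟨b, hyb⟩
    · refine ⟨x + z, x - z, t, ?_⟩
      have hy2 : y ^ 2 = 4 * t ^ 2 := by rw [hyt]; ring
      linear_combination -hnZ - 2 * hxyz - 2 * hy2
    · rcases Int.even_or_odd x with ⟨t, hxt⟩ | ⟨a, hxa⟩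
      · refine ⟨y + z, y - z, t, ?_⟩
        have hx2 : x ^ 2 = 4 * t ^ 2 := by rw [hxt]; ring
        linear_combination -hnZ - 2 * hxyz - 2 * hx2
      · exfalso
        obtain ⟨E, hE⟩ : ∃ E : ℤ, (m : ℤ) = 4 * E + 3 :=
          ⟨a ^ 2 + a + b ^ 2 + b + c ^ 2 + c, by rw [hxyz, hxa, hyb, hzc]; ring⟩
        omega


end Stmt16

theorem stmt_16 (n : ℕ) (hn : 0 < n) (h : n % 8 = 2) :
    ∃ x y z : ℤ, x ^ 2 + y ^ 2 + 8 * z ^ 2 = (n : ℤ) :=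
  Stmt16.main n hn h
end

section
/- For every positive integer m, if 3m is represented by the form x² + y² + 7z² with x ≡ y ≡ z (mod 3), then 3m is represented by the ternary lattice with Gram matrix [[1,0,0],[0,2,1],[0,1,4]]. -/
/-! Since x ≡ y ≡ z (mod 3) we may write y = x + 3s and z = x + 3t. In these coordinates
x² + y² + 7z² becomes a² + 2b² + 4c² + 2bc at the integral point a = 3x + s + 7t, b = s + t,
c = s - 2t, so every value of the congruence-restricted form is a value of the lattice. -/

theorem sq_add_sq_add_seven_mul_sq_eq (x s t : ℤ) :
    x ^ 2 + (x + 3 * s) ^ 2 + 7 * (x + 3 * t) ^ 2 =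
      (3 * x + s + 7 * t) ^ 2 + 2 * (s + t) ^ 2 + 4 * (s - 2 * t) ^ 2 +
        2 * (s + t) * (s - 2 * t) := by
  ring

theorem exists_lattice_rep_of_emod_three_eq {x y z : ℤ} (hxy : x % 3 = y % 3)
    (hyz : y % 3 = z % 3) :
    ∃ a b c : ℤ, a ^ 2 + 2 * b ^ 2 + 4 * c ^ 2 + 2 * b * c = x ^ 2 + y ^ 2 + 7 * z ^ 2 := by
  obtain ⟨s, rfl⟩ : ∃ s, y = x + 3 * s := ⟨(y - x) / 3, by omega⟩
  obtain ⟨t, rfl⟩ : ∃ t, z = x + 3 * t := ⟨(z - x) / 3, by omega⟩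
  exact ⟨_, _, _, (sq_add_sq_add_seven_mul_sq_eq x s t).symm⟩

theorem stmt_17_general (m : ℕ)
    (h : ∃ x y z : ℤ, x ^ 2 + y ^ 2 + 7 * z ^ 2 = 3 * (m : ℤ) ∧
      x % 3 = y % 3 ∧ y % 3 = z % 3) :
    ∃ a b c : ℤ, a ^ 2 + 2 * b ^ 2 + 4 * c ^ 2 + 2 * b * c = 3 * (m : ℤ) := by
  obtain ⟨x, y, z, hrep, hxy, hyz⟩ := h
  rw [← hrep]
  exact exists_lattice_rep_of_emod_three_eq hxy hyz

theorem stmt_17 (m : ℕ) (hm : 0 < m)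
    (h : ∃ x y z : ℤ, x ^ 2 + y ^ 2 + 7 * z ^ 2 = 3 * (m : ℤ) ∧
      x % 3 = y % 3 ∧ y % 3 = z % 3) :
    ∃ a b c : ℤ, a ^ 2 + 2 * b ^ 2 + 4 * c ^ 2 + 2 * b * c = 3 * (m : ℤ) :=
  stmt_17_general m h
end
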